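/- arXiv:2105.01583 — 12 statements merged into one kernel-verified Lean document; each statement's English description precedes it below -/
import Mathlib

section
/- Let E and F be finite-dimensional real normed spaces, let ψ : F → E be twice continuously differentiable, and let Q : F → L(E, E) be a continuously differentiable map into the space of continuous linear operators on E such that Q(u) ∘ Dψ(u) = Dψ(u) for all u in a neighborhood of 0 (where Dψ(u) is the Fréchet derivative of ψ at u). Then for all a, b ∈ F, (DQ(0)(a))(Dψ(0)(b)) = (DQ(0)(b))(Dψ(0)(a)). (This is the chart-level formulation of the paper's lemma that for a field of projections Π onto the tangent spaces of an embedded submanifold, the directional derivatives satisfy (D_ξ Π)η = (D_η Π)ξ for tangent vectors ξ, η.) -/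
theorem stmt2
    {E F : Type*} [NormedAddCommGroup E] [NormedSpace ℝ E] [FiniteDimensional ℝ E]
    [NormedAddCommGroup F] [NormedSpace ℝ F] [FiniteDimensional ℝ F]
    (ψ : F → E) (hψ : ContDiff ℝ 2 ψ)
    (Q : F → (E →L[ℝ] E)) (hQ : ContDiff ℝ 1 Q)
    (hfix : ∀ᶠ u in nhds (0 : F), (Q u).comp (fderiv ℝ ψ u) = fderiv ℝ ψ u)
    (a b : F) :
    (fderiv ℝ Q 0 a) (fderiv ℝ ψ 0 b) = (fderiv ℝ Q 0 b) (fderiv ℝ ψ 0 a) := by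
  set d : F → (F →L[ℝ] E) := fderiv ℝ ψ with hd_def
  have hd : ContDiff ℝ 1 d := ((contDiff_succ_iff_fderiv (n := 1)).1 (by exact_mod_cast hψ)).2.2
  have hQdiff : HasFDerivAt Q (fderiv ℝ Q 0) 0 :=
    (hQ.differentiable one_ne_zero 0).hasFDerivAt
  have hddiff : HasFDerivAt d (fderiv ℝ d 0) 0 :=
    (hd.differentiable one_ne_zero 0).hasFDerivAt
  have hcomp := hQdiff.clm_comp hddiff
  have hcomp' : HasFDerivAt d
      (((ContinuousLinearMap.compL ℝ F E E (Q 0)).comp (fderiv ℝ d 0)) +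
        (((ContinuousLinearMap.compL ℝ F E E).flip (d 0)).comp (fderiv ℝ Q 0))) 0 :=
    hcomp.congr_of_eventuallyEq (hfix.mono fun u hu => hu.symm)
  have huniq := hddiff.unique hcomp'
  have key : ∀ v w : F, fderiv ℝ d 0 v w =
      (Q 0) (fderiv ℝ d 0 v w) + (fderiv ℝ Q 0 v) (d 0 w) := by
    intro v w
    have := congrFun (congrArg (fun L => fun v w => L v w) huniq) v
    exact congrFun this w
  have hsymm : fderiv ℝ d 0 a b = fderiv ℝ d 0 b a :=
    (hψ.contDiffAt.isSymmSndFDerivAt (by simp [minSmoothness_of_isRCLikeNormedField])) a b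
  have h1 := key a b
  rw [hsymm] at h1
  have h2 := key b a
  exact add_left_cancel (h1.symm.trans h2)
end

section
/- Let E be a finite-dimensional real inner product space, T ⊆ E and T₂ ⊆ E × E linear subspaces, and f₁, f₂ : E × E → E linear maps with f₁(T₂) = T and f₂(T₂) = T, such that the map f₁ ⊕ f₂ : E × E → E × E, ω̃ ↦ (f₁ ω̃, f₂ ω̃), is invertible and restricts to a bijection from T₂ onto T × T. Let g₁, g₂ be self-adjoint positive-definite operators on E, and let Π₁, Π₂ be the orthogonal projections of E onto T with respect to the inner products ⟨·, g₁·⟩ and ⟨·, g₂·⟩ respectively. Then the operator G := f₁ᵀ ∘ g₁ ∘ f₁ + f₂ᵀ ∘ g₂ ∘ f₂ on E × E is self-adjoint and positive-definite, and the operator Π_G := (f₁ ⊕ f₂)⁻¹ ∘ (Π₁ ⊕ Π₂) ∘ (f₁ ⊕ f₂) is the orthogonal projection of E × E onto T₂ with respect to ⟨·, G·⟩; that is, Π_G ω̃ ∈ T₂ for all ω̃ ∈ E × E, and ⟨Π_G ω̃, G η̃⟩ = ⟨ω̃, G η̃⟩ for all η̃ ∈ T₂. -/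
open scoped RealInnerProductSpace

/-- The product inner product on `E × E`. -/
noncomputable def prodInner {E : Type*} [NormedAddCommGroup E] [InnerProductSpace ℝ E]
    (x y : E × E) : ℝ :=
  ⟪x.1, y.1⟫ + ⟪x.2, y.2⟫

theorem stmt3
    {E : Type*} [NormedAddCommGroup E] [InnerProductSpace ℝ E] [FiniteDimensional ℝ E]
    (T : Submodule ℝ E) (T₂ : Submodule ℝ (E × E))
    (f₁ f₂ : E × E →ₗ[ℝ] E)
    -- `F` is the invertible map `f₁ ⊕ f₂ : ω̃ ↦ (f₁ ω̃, f₂ ω̃)`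
    (F : (E × E) ≃ₗ[ℝ] (E × E)) (hF : ∀ ω : E × E, F ω = (f₁ ω, f₂ ω))
    (hf₁T : Submodule.map f₁ T₂ = T) (hf₂T : Submodule.map f₂ T₂ = T)
    -- `f₁ ⊕ f₂` restricts to a bijection between `T₂` and `T × T`
    (hFT : Submodule.map (F : (E × E) →ₗ[ℝ] (E × E)) T₂ = T.prod T)
    (g₁ g₂ : E →ₗ[ℝ] E)
    (hg₁s : g₁.IsSymmetric) (hg₂s : g₂.IsSymmetric)
    (hg₁p : ∀ ω : E, ω ≠ 0 → 0 < ⟪ω, g₁ ω⟫) (hg₂p : ∀ ω : E, ω ≠ 0 → 0 < ⟪ω, g₂ ω⟫)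
    -- `P₁`, `P₂` are the orthogonal projections onto `T` w.r.t. `⟨·, g₁·⟩`, `⟨·, g₂·⟩`
    (P₁ P₂ : E →ₗ[ℝ] E)
    (hP₁mem : ∀ ω : E, P₁ ω ∈ T) (hP₂mem : ∀ ω : E, P₂ ω ∈ T)
    (hP₁orth : ∀ ω : E, ∀ η ∈ T, ⟪ω - P₁ ω, g₁ η⟫ = 0)
    (hP₂orth : ∀ ω : E, ∀ η ∈ T, ⟪ω - P₂ ω, g₂ η⟫ = 0)
    -- `f₁a`, `f₂a` are the adjoints `f₁ᵀ`, `f₂ᵀ`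
    (f₁a f₂a : E →ₗ[ℝ] E × E)
    (hf₁a : ∀ (x : E) (ω : E × E), prodInner (f₁a x) ω = ⟪x, f₁ ω⟫)
    (hf₂a : ∀ (x : E) (ω : E × E), prodInner (f₂a x) ω = ⟪x, f₂ ω⟫)
    -- `G := f₁ᵀ ∘ g₁ ∘ f₁ + f₂ᵀ ∘ g₂ ∘ f₂`
    (G : (E × E) →ₗ[ℝ] (E × E))
    (hG : ∀ ω : E × E, G ω = f₁a (g₁ (f₁ ω)) + f₂a (g₂ (f₂ ω)))
    -- `Π_G := (f₁ ⊕ f₂)⁻¹ ∘ (P₁ ⊕ P₂) ∘ (f₁ ⊕ f₂)`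
    (PG : (E × E) →ₗ[ℝ] (E × E))
    (hPG : ∀ ω : E × E, PG ω = F.symm (P₁ (f₁ ω), P₂ (f₂ ω))) :
    (∀ x y : E × E, prodInner (G x) y = prodInner x (G y)) ∧
    (∀ x : E × E, x ≠ 0 → 0 < prodInner x (G x)) ∧
    (∀ ω : E × E, PG ω ∈ T₂) ∧
    (∀ ω : E × E, ∀ η ∈ T₂, prodInner (PG ω) (G η) = prodInner ω (G η)) := by

  have pcomm : ∀ x y : E × E, prodInner x y = prodInner y x := by
    intro x y; simp [prodInner, real_inner_comm]
  have padd : ∀ x y z : E × E, prodInner x (y + z) = prodInner x y + prodInner x z := by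
    intro x y z; simp [prodInner, inner_add_right]; ring
  have key : ∀ x y : E × E, prodInner x (G y) = ⟪f₁ x, g₁ (f₁ y)⟫ + ⟪f₂ x, g₂ (f₂ y)⟫ := by
    intro x y
    rw [hG, padd, pcomm x, pcomm x, hf₁a, hf₂a, real_inner_comm, real_inner_comm (g₂ _)]
  have nonneg : ∀ (g : E →ₗ[ℝ] E), (∀ ω : E, ω ≠ 0 → 0 < ⟪ω, g ω⟫) → ∀ ω : E, 0 ≤ ⟪ω, g ω⟫ := by
    intro g hg ω
    by_cases h : ω = 0
    · simp [h]
    · exact (hg ω h).le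
  refine ⟨?_, ?_, ?_, ?_⟩
  · intro x y
    have e1 : ⟪f₁ y, g₁ (f₁ x)⟫ = ⟪f₁ x, g₁ (f₁ y)⟫ := by
      rw [← hg₁s]; exact real_inner_comm _ _
    have e2 : ⟪f₂ y, g₂ (f₂ x)⟫ = ⟪f₂ x, g₂ (f₂ y)⟫ := by
      rw [← hg₂s]; exact real_inner_comm _ _
    rw [pcomm, key, key, e1, e2]
  · intro x hx
    rw [key]
    have hFx : F x ≠ 0 := by
      intro h; exact hx (by simpa using congrArg F.symm h)
    rw [hF] at hFx
    by_cases h1 : f₁ x = 0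
    · have h2 : f₂ x ≠ 0 := by
        intro h2; exact hFx (by simp [h1, h2, Prod.ext_iff])
      have := hg₂p (f₂ x) h2
      have := nonneg g₁ hg₁p (f₁ x)
      linarith
    · have := hg₁p (f₁ x) h1
      have := nonneg g₂ hg₂p (f₂ x)
      linarith
  · intro ω
    rw [hPG]
    have hmem : (P₁ (f₁ ω), P₂ (f₂ ω)) ∈ T.prod T := ⟨hP₁mem _, hP₂mem _⟩
    rw [← hFT] at hmem
    obtain ⟨η, hη, hηeq⟩ := hmem
    have : F.symm (P₁ (f₁ ω), P₂ (f₂ ω)) = η := by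
      rw [← hηeq]; simp
    rw [this]; exact hη
  · intro ω η hη
    have hfη₁ : f₁ η ∈ T := hf₁T ▸ ⟨η, hη, rfl⟩
    have hfη₂ : f₂ η ∈ T := hf₂T ▸ ⟨η, hη, rfl⟩
    have hPG1 : f₁ (PG ω) = P₁ (f₁ ω) ∧ f₂ (PG ω) = P₂ (f₂ ω) := by
      have : F (PG ω) = (P₁ (f₁ ω), P₂ (f₂ ω)) := by rw [hPG]; simp
      rw [hF] at this
      exact ⟨congrArg Prod.fst this, congrArg Prod.snd this⟩
    rw [key, key, hPG1.1, hPG1.2]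
    have h1 := hP₁orth (f₁ ω) (f₁ η) hfη₁
    have h2 := hP₂orth (f₂ ω) (f₂ η) hfη₂
    rw [inner_sub_left] at h1 h2
    linarith
end

section
/- Let E be a finite-dimensional real inner product space, T ⊆ E and T₂ ⊆ E × E linear subspaces, and f₁, f₂ : E × E → E linear maps with f₁(T₂) = T and f₂(T₂) = T, such that f₁ ⊕ f₂ : E × E → E × E, ω̃ ↦ (f₁ ω̃, f₂ ω̃), is invertible and restricts to a bijection from T₂ onto T × T. Let g₁, g₂ be self-adjoint positive-definite operators on E, and set G := f₁ᵀ ∘ g₁ ∘ f₁ + f₂ᵀ ∘ g₂ ∘ f₂. Then the kernels of f₁ and f₂ are orthogonal to each other with respect to the inner product ⟨·, G·⟩, and E × E = ker f₁ ⊕ ker f₂ (internal direct sum). -/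
open scoped RealInnerProductSpace

theorem stmt4
    {E : Type*} [NormedAddCommGroup E] [InnerProductSpace ℝ E] [FiniteDimensional ℝ E]
    (T : Submodule ℝ E) (T₂ : Submodule ℝ (E × E))
    (f₁ f₂ : E × E →ₗ[ℝ] E)
    -- `F` is the invertible map `f₁ ⊕ f₂ : ω̃ ↦ (f₁ ω̃, f₂ ω̃)`
    (F : (E × E) ≃ₗ[ℝ] (E × E)) (hF : ∀ ω : E × E, F ω = (f₁ ω, f₂ ω))
    (hf₁T : Submodule.map f₁ T₂ = T) (hf₂T : Submodule.map f₂ T₂ = T)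
    -- `f₁ ⊕ f₂` restricts to a bijection between `T₂` and `T × T`
    (hFT : Submodule.map (F : (E × E) →ₗ[ℝ] (E × E)) T₂ = T.prod T)
    (g₁ g₂ : E →ₗ[ℝ] E)
    (hg₁s : g₁.IsSymmetric) (hg₂s : g₂.IsSymmetric)
    (hg₁p : ∀ ω : E, ω ≠ 0 → 0 < ⟪ω, g₁ ω⟫) (hg₂p : ∀ ω : E, ω ≠ 0 → 0 < ⟪ω, g₂ ω⟫)
    -- `f₁a`, `f₂a` are the adjoints `f₁ᵀ`, `f₂ᵀ`
    (f₁a f₂a : E →ₗ[ℝ] E × E)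
    (hf₁a : ∀ (x : E) (ω : E × E), prodInner (f₁a x) ω = ⟪x, f₁ ω⟫)
    (hf₂a : ∀ (x : E) (ω : E × E), prodInner (f₂a x) ω = ⟪x, f₂ ω⟫)
    -- `G := f₁ᵀ ∘ g₁ ∘ f₁ + f₂ᵀ ∘ g₂ ∘ f₂`
    (G : (E × E) →ₗ[ℝ] (E × E))
    (hG : ∀ ω : E × E, G ω = f₁a (g₁ (f₁ ω)) + f₂a (g₂ (f₂ ω))) :
    (∀ x ∈ LinearMap.ker f₁, ∀ y ∈ LinearMap.ker f₂, prodInner x (G y) = 0) ∧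
    IsCompl (LinearMap.ker f₁) (LinearMap.ker f₂) := by
  have symm : ∀ x y : E × E, prodInner x y = prodInner y x := by
    intro x y
    simp [prodInner, real_inner_comm]
  constructor
  · intro x hx y hy
    have hx1 : f₁ x = 0 := hx
    have hy2 : f₂ y = 0 := hy
    rw [hG]
    have h1 : prodInner x (f₁a (g₁ (f₁ y))) = 0 := by
      rw [symm, hf₁a, hx1, inner_zero_right]
    have h2 : prodInner x (f₂a (g₂ (f₂ y))) = 0 := by
      rw [hy2, map_zero, map_zero]
      simp [prodInner]
    calc prodInner x (f₁a (g₁ (f₁ y)) + f₂a (g₂ (f₂ y)))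
        = prodInner x (f₁a (g₁ (f₁ y))) + prodInner x (f₂a (g₂ (f₂ y))) := by
          simp [prodInner, inner_add_right]; ring
      _ = 0 := by rw [h1, h2, add_zero]
  · constructor
    · rw [disjoint_iff_inf_le]
      intro x hx
      have h1 : f₁ x = 0 := hx.1
      have h2 : f₂ x = 0 := hx.2
      have : F x = F 0 := by rw [hF, h1, h2, map_zero]; rfl
      have := F.injective this
      simpa using this
    · rw [codisjoint_iff_le_sup]
      intro ω _
      set u := F.symm (0, f₂ ω) with hu
      set v := F.symm (f₁ ω, 0) with hv
      have hFu : F u = (0, f₂ ω) := F.apply_symm_apply _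
      have hFv : F v = (f₁ ω, 0) := F.apply_symm_apply _
      have hu1 : f₁ u = 0 := by
        have := hF u; rw [hFu] at this
        exact (congrArg Prod.fst this).symm
      have hv2 : f₂ v = 0 := by
        have := hF v; rw [hFv] at this
        exact (congrArg Prod.snd this).symm
      have hsum : u + v = ω := by
        apply F.injective
        rw [map_add, hFu, hFv, hF, Prod.mk_add_mk, zero_add, add_zero]
      have : ω ∈ LinearMap.ker f₁ ⊔ LinearMap.ker f₂ := by
        rw [← hsum]
        exact Submodule.add_mem_sup hu1 hv2
      exact this
end

section
/- Let E be a finite-dimensional real inner product space, T ⊆ E a subspace, g a self-adjoint positive-definite operator on E such that g ∘ Π is self-adjoint, where Π is the orthogonal projection of E onto T with respect to ⟨·, g·⟩ (so Π is idempotent with range T). Let v ∈ T, α > 0, β ≥ 0, and define ĝ ω := α · g ω + β · ⟨v, g ω⟩ · g v. Then ĝ ∘ Π is also self-adjoint; consequently Π is simultaneously the orthogonal projection of E onto T with respect to the inner product ⟨·, ĝ·⟩, i.e. Π ω ∈ T and ⟨Π ω, ĝ η⟩ = ⟨ω, ĝ η⟩ for all ω ∈ E and η ∈ T. -/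
open scoped RealInnerProductSpace

theorem stmt6
    {E : Type*} [NormedAddCommGroup E] [InnerProductSpace ℝ E] [FiniteDimensional ℝ E]
    (T : Submodule ℝ E)
    (g : E →ₗ[ℝ] E) (hgs : g.IsSymmetric) (hgp : ∀ ω : E, ω ≠ 0 → 0 < ⟪ω, g ω⟫)
    -- `P` is the orthogonal projection onto `T` w.r.t. `⟨·, g·⟩`:
    -- idempotent with range `T` and `g ∘ P` self-adjoint
    (P : E →ₗ[ℝ] E) (hPidem : P ∘ₗ P = P) (hPrange : LinearMap.range P = T)
    (hgP : (g ∘ₗ P).IsSymmetric)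
    (v : E) (hv : v ∈ T) (α β : ℝ) (hα : 0 < α) (hβ : 0 ≤ β)
    (gh : E → E) (hgh : ∀ ω : E, gh ω = α • g ω + (β * ⟪v, g ω⟫) • g v) :
    (∀ x y : E, ⟪gh (P x), y⟫ = ⟪x, gh (P y)⟫) ∧
    (∀ ω : E, P ω ∈ T) ∧
    (∀ ω : E, ∀ η ∈ T, ⟪P ω, gh η⟫ = ⟪ω, gh η⟫) := by
  have hPT : ∀ η ∈ T, P η = η := by
    intro η hη
    rw [← hPrange] at hη
    obtain ⟨z, rfl⟩ := hη
    have := congrArg (fun f => f z) hPidem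
    simpa using this
  have hPv : P v = v := hPT v hv
  have hgP' : ∀ x y : E, ⟪g (P x), y⟫ = ⟪x, g (P y)⟫ := by
    intro x y; exact hgP x y
  have h1 : ∀ x y : E, ⟪gh (P x), y⟫ = ⟪x, gh (P y)⟫ := by
    intro x y
    rw [hgh, hgh]
    rw [inner_add_left, inner_add_right, inner_smul_left, inner_smul_right,
      inner_smul_left, inner_smul_right]
    have hA : ⟪g (P x), y⟫ = ⟪x, g (P y)⟫ := hgP' x y
    have hB : ⟪v, g (P x)⟫ = ⟪x, g v⟫ := by
      rw [real_inner_comm, hgP' x v, hPv]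
    have hC : ⟪v, g (P y)⟫ = ⟪g v, y⟫ := by
      rw [real_inner_comm, hgP' y v, hPv, real_inner_comm]
    have hD : ⟪g v, y⟫ = ⟪v, g y⟫ := hgs v y
    simp only [RCLike.star_def, starRingEnd_apply, star_trivial]
    rw [hA, hB, hC]
    ring_nf
  refine ⟨h1, ?_, ?_⟩
  · intro ω; rw [← hPrange]; exact ⟨ω, rfl⟩
  · intro ω η hη
    have hPη : P η = η := hPT η hη
    calc ⟪P ω, gh η⟫ = ⟪gh (P η), P ω⟫ := by rw [hPη, real_inner_comm]
      _ = ⟪η, gh (P (P ω))⟫ := h1 η (P ω)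
      _ = ⟪η, gh (P ω)⟫ := by
          congr 2
          have := congrArg (fun f => f ω) hPidem
          simpa using this
      _ = ⟪gh (P η), ω⟫ := (h1 η ω).symm
      _ = ⟪ω, gh η⟫ := by rw [hPη, real_inner_comm]
end

section
/- Let m be a Lie ring (e.g. a Lie algebra over ℝ), and let k, b be complementary additive subgroups (submodules) of m, m = k ⊕ b, with associated projections π_k, π_b satisfying π_k + π_b = id. Assume ⁅x, y⁆ ∈ b whenever x ∈ k and y ∈ b. Then for all A, B, C ∈ b the following identity holds: 4⁅π_k⁅A,B⁆, C⁆ − π_b⁅A, π_b⁅B,C⁆⁆ − π_b⁅B, π_b⁅C,A⁆⁆ + 2 π_b⁅π_b⁅A,B⁆, C⁆ = 2⁅π_k⁅A,B⁆, C⁆ + π_b⁅⁅A,B⁆, C⁆ − ⁅π_k⁅B,C⁆, A⁆ − ⁅π_k⁅C,A⁆, B⁆. (This is the paper's proof that its curvature formula for flag manifolds is an alternative form of the classical curvature formula for naturally reductive homogeneous spaces.) -/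
theorem stmt7
    {m : Type*} [LieRing m]
    (k b : AddSubgroup m)
    (hdisj : k ⊓ b = ⊥)
    (πk πb : m →+ m)
    (hsum : ∀ x : m, πk x + πb x = x)
    (hπk_mem : ∀ x : m, πk x ∈ k) (hπb_mem : ∀ x : m, πb x ∈ b)
    (hπk_id : ∀ x ∈ k, πk x = x) (hπb_id : ∀ x ∈ b, πb x = x)
    (hreductive : ∀ x ∈ k, ∀ y ∈ b, ⁅x, y⁆ ∈ b)
    (A B C : m) (hA : A ∈ b) (hB : B ∈ b) (hC : C ∈ b) :
    4 • ⁅πk ⁅A, B⁆, C⁆ - πb ⁅A, πb ⁅B, C⁆⁆ - πb ⁅B, πb ⁅C, A⁆⁆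
        + 2 • πb ⁅πb ⁅A, B⁆, C⁆
      = 2 • ⁅πk ⁅A, B⁆, C⁆ + πb ⁅⁅A, B⁆, C⁆ - ⁅πk ⁅B, C⁆, A⁆ - ⁅πk ⁅C, A⁆, B⁆ := by
  -- πb fixes brackets of k-elements with b-elements
  have hfix : ∀ x : m, ∀ y ∈ b, πb ⁅πk x, y⁆ = ⁅πk x, y⁆ := fun x y hy =>
    hπb_id _ (hreductive _ (hπk_mem x) _ hy)
  have hπb_eq : ∀ x : m, πb x = x - πk x := fun x => eq_sub_of_add_eq' (hsum x)
  -- key rewrites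
  have hA' : πb ⁅A, πb ⁅B, C⁆⁆ = πb ⁅A, ⁅B, C⁆⁆ + ⁅πk ⁅B, C⁆, A⁆ := by
    rw [hπb_eq ⁅B, C⁆, lie_sub, map_sub, ← lie_skew A (πk ⁅B, C⁆), map_neg,
      hfix _ _ hA, sub_neg_eq_add]
  have hB' : πb ⁅B, πb ⁅C, A⁆⁆ = πb ⁅B, ⁅C, A⁆⁆ + ⁅πk ⁅C, A⁆, B⁆ := by
    rw [hπb_eq ⁅C, A⁆, lie_sub, map_sub, ← lie_skew B (πk ⁅C, A⁆), map_neg,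
      hfix _ _ hB, sub_neg_eq_add]
  have hAB : πb ⁅πb ⁅A, B⁆, C⁆ = πb ⁅⁅A, B⁆, C⁆ - ⁅πk ⁅A, B⁆, C⁆ := by
    rw [hπb_eq ⁅A, B⁆, sub_lie, map_sub, hfix _ _ hC]
  have hJac : πb ⁅A, ⁅B, C⁆⁆ + πb ⁅B, ⁅C, A⁆⁆ = πb ⁅⁅A, B⁆, C⁆ := by
    rw [← map_add]
    congr 1
    have : ⁅B, ⁅C, A⁆⁆ = -⁅B, ⁅A, C⁆⁆ := by rw [← lie_skew C A, lie_neg]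
    rw [this, lie_lie]
    abel
  rw [hA', hB', hAB, ← hJac]
  abel
end

section
/- Let m be a finite-dimensional real Lie algebra equipped with a norm making it a normed real vector space (the Lie bracket is then automatically continuous). Let k and b be submodules with m = k ⊕ b (internal direct sum) and projections π_k, π_b, and assume ⁅x, y⁆ ∈ b whenever x ∈ k and y ∈ b. Let A, C, E ∈ b and set G := (1/2) π_b⁅A,C⁆ + E − ⁅A,C⁆. Define F : ℝ → m by F(t) := π_b ( C + ∫₀ᵗ exp(−s · ad_A) G ds ), which equals π_b(C + t 𝒵(t · ad_A) G) with 𝒵(x) = (1 − e^{−x})/x = Σ_{n≥0} (−1)ⁿ xⁿ/(n+1)!. Then F is twice differentiable, F(0) = C, F′(0) = E − (1/2) π_b⁅A,C⁆, and for all t ∈ ℝ: F″(t) + π_b⁅A, F′(t)⁆ − ⁅A, π_k⁅A, F(t)⁆⁆ = 0. (This is the closed-form solution of the Jacobi field equation along the geodesic t ↦ U exp(tA) of a naturally reductive homogeneous space M/K, with initial value C and initial covariant derivative E.) -/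
theorem stmt8
    {m : Type*} [NormedAddCommGroup m] [NormedSpace ℝ m] [FiniteDimensional ℝ m]
    -- the Lie bracket of `m`, as a bilinear map
    (br : m →ₗ[ℝ] m →ₗ[ℝ] m)
    (halt : ∀ x : m, br x x = 0)
    (hjac : ∀ x y z : m, br x (br y z) = br (br x y) z + br y (br x z))
    (k b : Submodule ℝ m) (hcompl : IsCompl k b)
    (πk πb : m →ₗ[ℝ] m)
    (hsum : ∀ x : m, πk x + πb x = x)
    (hπk_mem : ∀ x : m, πk x ∈ k) (hπb_mem : ∀ x : m, πb x ∈ b)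
    (hπk_id : ∀ x ∈ k, πk x = x) (hπb_id : ∀ x ∈ b, πb x = x)
    (hred : ∀ x ∈ k, ∀ y ∈ b, br x y ∈ b)
    (A C E : m) (hA : A ∈ b) (hC : C ∈ b) (hE : E ∈ b)
    (G : m) (hG : G = (1 / 2 : ℝ) • πb (br A C) + E - br A C)
    (F : ℝ → m)
    (hF : ∀ t : ℝ, F t = πb (C + ∫ s in (0:ℝ)..t,
      (NormedSpace.exp ((-s) • (br A).toContinuousLinearMap)) G)) :
    ∃ F' F'' : ℝ → m,
      (∀ t : ℝ, HasDerivAt F (F' t) t) ∧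
      (∀ t : ℝ, HasDerivAt F' (F'' t) t) ∧
      F 0 = C ∧
      F' 0 = E - (1 / 2 : ℝ) • πb (br A C) ∧
      ∀ t : ℝ, F'' t + πb (br A (F' t)) - br A (πk (br A (F t))) = 0 := by
  have hcomplete : CompleteSpace m := FiniteDimensional.complete ℝ m
  set T : m →L[ℝ] m := (br A).toContinuousLinearMap with hT
  have hTapp : ∀ x : m, T x = br A x := fun x => by simp [hT]
  -- basic projection facts
  have hπk0 : ∀ x ∈ b, πk x = 0 := by
    intro x hx
    have h := hsum x
    rw [hπb_id x hx] at h
    have := eq_sub_of_add_eq h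
    simpa using this
  have hanti : ∀ x y : m, br x y = - br y x := by
    intro x y
    have h := halt (x + y)
    simp only [map_add, LinearMap.add_apply, halt] at h
    have h' : br x y + br y x = 0 := by
      have := h
      abel_nf at this ⊢
      simpa using this
    exact eq_neg_of_add_eq_zero_left h'
  have hAk_mem : ∀ y : m, br A (πk y) ∈ b := by
    intro y
    rw [hanti]
    exact b.neg_mem (hred _ (hπk_mem y) A hA)
  -- the integrand
  set g : ℝ → m := fun s => NormedSpace.exp ((-s) • T) G with hg
  have hgd : ∀ s : ℝ, HasDerivAt g (-(T (g s))) s := by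
    intro s
    have h1 : HasDerivAt (fun u : ℝ => NormedSpace.exp (u • T))
        (T * NormedSpace.exp ((-s) • T)) (-s) :=
      hasDerivAt_exp_smul_const' T (-s)
    have h2 : HasDerivAt (fun u : ℝ => -u) (-1 : ℝ) s := (hasDerivAt_id s).neg
    have h3 : HasDerivAt (fun u : ℝ => NormedSpace.exp ((-u) • T))
        ((-1 : ℝ) • (T * NormedSpace.exp ((-s) • T))) s := h1.scomp s h2
    have h4 := h3.clm_apply (hasDerivAt_const s G)
    simpa [ContinuousLinearMap.mul_apply, hg] using h4
  have hgc : Continuous g := continuous_iff_continuousAt.2 fun s => (hgd s).continuousAt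
  have hg0 : g 0 = G := by simp [hg]
  -- the integral
  set I : ℝ → m := fun t => ∫ s in (0:ℝ)..t, g s with hI
  have hId : ∀ t : ℝ, HasDerivAt I (g t) t := fun t =>
    intervalIntegral.integral_hasDerivAt_right (hgc.intervalIntegrable 0 t)
      (hgc.stronglyMeasurableAtFilter _ _) hgc.continuousAt
  -- continuous versions of the projections
  set Pb : m →L[ℝ] m := πb.toContinuousLinearMap with hPb
  have hPbapp : ∀ x : m, Pb x = πb x := fun x => by simp [hPb]
  have hFeq : F = fun t => Pb (C + I t) := by
    funext t
    rw [hF t, hPbapp]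
  have hFd : ∀ t : ℝ, HasDerivAt F (πb (g t)) t := by
    intro t
    have h := Pb.hasFDerivAt.comp_hasDerivAt t ((hasDerivAt_const t C).add (hId t))
    have he : (⇑Pb ∘ ((fun x => C) + I)) = F := by rw [hFeq]; rfl
    rw [he] at h
    simpa only [zero_add, hPbapp] using h
  have hF'd : ∀ t : ℝ, HasDerivAt (fun t => πb (g t)) (πb (-(T (g t)))) t := by
    intro t
    have h := Pb.hasFDerivAt.comp_hasDerivAt t (hgd t)
    have he : (⇑Pb ∘ g) = fun t => πb (g t) := funext fun u => hPbapp (g u)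
    rw [he] at h
    simpa only [hPbapp] using h
  -- F 0 = C
  have hF0 : F 0 = C := by
    rw [hFeq]
    simp only [hI, intervalIntegral.integral_same, add_zero, hPbapp]
    exact hπb_id C hC
  -- πb G
  have hπbG : πb G = E - (1 / 2 : ℝ) • πb (br A C) := by
    rw [hG]
    simp only [map_add, map_sub, map_smul, hπb_id _ (hπb_mem (br A C)), hπb_id E hE]
    module
  have hπkG : πk G = - πk (br A C) := by
    rw [hG]
    simp [map_add, map_sub, map_smul, hπk0 _ (hπb_mem (br A C)), hπk0 E hE]
  -- the key integral identity : br A (I t) = G - g t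
  have hTI : ∀ t : ℝ, br A (I t) = G - g t := by
    intro t
    have h1 : (∫ s in (0:ℝ)..t, -(T (g s))) = g t - g 0 :=
      intervalIntegral.integral_eq_sub_of_hasDerivAt (fun s _ => hgd s)
        (((T.continuous.comp hgc).neg).intervalIntegrable 0 t)
    have h2 : T (I t) = ∫ s in (0:ℝ)..t, T (g s) :=
      (T.intervalIntegral_comp_comm (hgc.intervalIntegrable 0 t)).symm
    have h3 : (∫ s in (0:ℝ)..t, T (g s)) = -(g t - g 0) := by
      rw [← h1, ← intervalIntegral.integral_neg]
      simp
    rw [← hTapp, h2, h3, hg0]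
    abel
  -- the key claim
  have hkey : ∀ t : ℝ, πk (br A (F t)) = - πk (g t) := by
    intro t
    have hFt : F t = C + πb (I t) := by
      rw [hFeq]
      simp only [hPbapp, map_add, hπb_id C hC]
    have e1 : br A (I t) = br A (πk (I t)) + br A (πb (I t)) := by
      conv_lhs => rw [← hsum (I t)]
      rw [map_add]
    have e2 : πk (br A (πk (I t))) = 0 := hπk0 _ (hAk_mem _)
    have e3 : πk (br A (πb (I t))) = πk (br A (I t)) := by
      have h := congrArg πk e1
      rw [map_add, e2, zero_add] at h
      exact h.symm
    have e4 : πk (br A (F t)) = πk (br A C) + πk (br A (I t)) := by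
      rw [hFt, map_add, map_add, e3]
    rw [e4, hTI t, map_sub, hπkG]
    abel
  refine ⟨fun t => πb (g t), fun t => πb (-(T (g t))), hFd, hF'd, hF0, ?_, ?_⟩
  · show πb (g 0) = E - (1 / 2 : ℝ) • πb (br A C)
    rw [hg0, hπbG]
  · intro t
    have hb1 : πb (br A (πk (g t))) = br A (πk (g t)) := hπb_id _ (hAk_mem _)
    have e1 : br A (g t) = br A (πk (g t)) + br A (πb (g t)) := by
      conv_lhs => rw [← hsum (g t)]
      rw [map_add]
    show πb (-(T (g t))) + πb (br A (πb (g t))) - br A (πk (br A (F t))) = 0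
    rw [hkey t, map_neg, map_neg, hTapp, e1, map_add, hb1]
    abel
end

section
/- Let m be a finite-dimensional real Lie algebra equipped with a norm making it a normed real vector space. Let k and b be submodules with m = k ⊕ b (internal direct sum) and projections π_k, π_b, and assume ⁅x, y⁆ ∈ b whenever x ∈ k and y ∈ b. Let A, C, E ∈ b, set G := (1/2) π_b⁅A,C⁆ + E − ⁅A,C⁆, and let X ∈ m. Then the two functions ℝ → m given by t ↦ π_b ( C + ∫₀ᵗ exp(−s · ad_A) G ds ) and t ↦ π_b ( exp(−t · ad_A) X ) are equal for all t ∈ ℝ if and only if C = π_b X and E = −(1/2) π_b⁅A,C⁆ − ⁅A, π_k X⁆. (This characterizes exactly which Jacobi fields along the geodesic t ↦ U exp(tA) of a naturally reductive homogeneous space are isotropic, i.e. arise from Killing fields generated by elements X of m.) -/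
private lemma aux_expDeriv {M : Type*} [NormedAddCommGroup M] [NormedSpace ℝ M]
    [CompleteSpace M] (T : M →L[ℝ] M) (v : M) (t₀ : ℝ) :
    HasDerivAt (fun t : ℝ => (NormedSpace.exp ((-t) • T)) v)
      (-((NormedSpace.exp ((-t₀) • T)) (T v))) t₀ := by
  have h1 := hasDerivAt_exp_smul_const (𝕂 := ℝ) T (-t₀)
  have h2 := h1.scomp t₀ (hasDerivAt_neg t₀)
  have h3 := h2.clm_apply (hasDerivAt_const t₀ v)
  simpa [Function.comp, ContinuousLinearMap.mul_apply] using h3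

private lemma aux_expCont {M : Type*} [NormedAddCommGroup M] [NormedSpace ℝ M]
    [CompleteSpace M] (T : M →L[ℝ] M) (v : M) :
    Continuous (fun t : ℝ => (NormedSpace.exp ((-t) • T)) v) :=
  continuous_iff_continuousAt.mpr fun t => (aux_expDeriv T v t).continuousAt

private lemma aux_ftc {M : Type*} [NormedAddCommGroup M] [NormedSpace ℝ M]
    [CompleteSpace M] (h : ℝ → M) (hc : Continuous h) (t₀ : ℝ) :
    HasDerivAt (fun t => ∫ s in (0:ℝ)..t, h s) (h t₀) t₀ :=
  intervalIntegral.integral_hasDerivAt_right (hc.intervalIntegrable _ _)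
    (hc.stronglyMeasurableAtFilter _ _) hc.continuousAt

private lemma aux_int {M : Type*} [NormedAddCommGroup M] [NormedSpace ℝ M]
    [CompleteSpace M] (T : M →L[ℝ] M) (v : M) (t : ℝ) :
    ∫ s in (0:ℝ)..t, (NormedSpace.exp ((-s) • T)) (T v)
      = v - (NormedSpace.exp ((-t) • T)) v := by
  have hderiv : ∀ s ∈ Set.uIcc (0:ℝ) t,
      HasDerivAt (fun u : ℝ => -((NormedSpace.exp ((-u) • T)) v))
        ((NormedSpace.exp ((-s) • T)) (T v)) s := fun s _ => by
    have h := (aux_expDeriv T v s).neg; rw [neg_neg] at h; exact h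
  have hint : IntervalIntegrable (fun s : ℝ => (NormedSpace.exp ((-s) • T)) (T v))
      MeasureTheory.volume 0 t := (aux_expCont T (T v)).intervalIntegrable _ _
  rw [intervalIntegral.integral_eq_sub_of_hasDerivAt hderiv hint]
  simp [NormedSpace.exp_zero]
  abel

theorem stmt9
    {m : Type*} [NormedAddCommGroup m] [NormedSpace ℝ m] [FiniteDimensional ℝ m]
    -- the Lie bracket of `m`, as a bilinear map
    (br : m →ₗ[ℝ] m →ₗ[ℝ] m)
    (halt : ∀ x : m, br x x = 0)
    (hjac : ∀ x y z : m, br x (br y z) = br (br x y) z + br y (br x z))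
    (k b : Submodule ℝ m) (hcompl : IsCompl k b)
    (πk πb : m →ₗ[ℝ] m)
    (hsum : ∀ x : m, πk x + πb x = x)
    (hπk_mem : ∀ x : m, πk x ∈ k) (hπb_mem : ∀ x : m, πb x ∈ b)
    (hπk_id : ∀ x ∈ k, πk x = x) (hπb_id : ∀ x ∈ b, πb x = x)
    (hred : ∀ x ∈ k, ∀ y ∈ b, br x y ∈ b)
    (A C E : m) (hA : A ∈ b) (hC : C ∈ b) (hE : E ∈ b)
    (G : m) (hG : G = (1 / 2 : ℝ) • πb (br A C) + E - br A C)
    (X : m) :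
    (∀ t : ℝ,
        πb (C + ∫ s in (0:ℝ)..t,
          (NormedSpace.exp ((-s) • (br A).toContinuousLinearMap)) G)
          = πb ((NormedSpace.exp ((-t) • (br A).toContinuousLinearMap)) X))
      ↔ (C = πb X ∧ E = -(1 / 2 : ℝ) • πb (br A C) - br A (πk X)) := by
  set T := (br A).toContinuousLinearMap with hT
  have hTapp : ∀ x : m, T x = br A x := fun x => rfl
  have skew : ∀ x y : m, br x y = - br y x := by
    intro x y
    have h := halt (x + y)
    simp only [map_add, LinearMap.add_apply, halt, zero_add, add_zero] at h
    rw [add_comm] at h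
    exact eq_neg_of_add_eq_zero_left h
  have hπbC : πb C = C := hπb_id C hC
  have hmemq : br A (πk X) ∈ b := by
    rw [skew]; exact neg_mem (hred _ (hπk_mem X) A hA)
  have hq : πb (br A (πk X)) = br A (πk X) := hπb_id _ hmemq
  constructor
  · intro H
    have h0 : C = πb X := by
      have h := H 0
      simpa [NormedSpace.exp_zero, hπbC] using h
    refine ⟨h0, ?_⟩
    -- derivatives at 0
    set πbL := LinearMap.toContinuousLinearMap πb with hπbL
    have hπbLapp : ∀ x : m, πbL x = πb x := fun x => rfl
    have hd1 : HasDerivAt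
        (fun t : ℝ => πb (C + ∫ s in (0:ℝ)..t, (NormedSpace.exp ((-s) • T)) G))
        (πbL ((NormedSpace.exp ((-(0:ℝ)) • T)) G)) 0 := by
      have hin := (hasDerivAt_const (0:ℝ) C).add (aux_ftc _ (aux_expCont T G) 0)
      rw [zero_add] at hin
      simpa only [Function.comp_def, hπbLapp, Pi.add_apply] using πbL.hasFDerivAt.comp_hasDerivAt 0 hin
    have hd2 : HasDerivAt
        (fun t : ℝ => πb ((NormedSpace.exp ((-t) • T)) X))
        (πbL (-((NormedSpace.exp ((-(0:ℝ)) • T)) (T X)))) 0 := by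
      simpa only [Function.comp_def, hπbLapp] using πbL.hasFDerivAt.comp_hasDerivAt 0 (aux_expDeriv T X 0)
    have hfun : (fun t : ℝ => πb (C + ∫ s in (0:ℝ)..t, (NormedSpace.exp ((-s) • T)) G))
        = fun t : ℝ => πb ((NormedSpace.exp ((-t) • T)) X) := funext H
    have hkey : πbL ((NormedSpace.exp ((-(0:ℝ)) • T)) G)
        = πbL (-((NormedSpace.exp ((-(0:ℝ)) • T)) (T X))) :=
      (hfun ▸ hd1).unique hd2
    simp only [neg_zero, zero_smul, NormedSpace.exp_zero, ContinuousLinearMap.one_apply,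
      hπbLapp, map_neg, hTapp] at hkey
    -- hkey : πb G = -πb (br A X)
    have hbAX : br A X = br A (πk X) + br A C := by
      conv_lhs => rw [← hsum X, ← h0]
      rw [map_add]
    rw [hG, hbAX] at hkey
    simp only [map_add, map_sub, map_smul, hπb_id _ (hπb_mem (br A C)),
      hπb_id E hE, hq] at hkey
    -- hkey : (1/2) • πb (br A C) + E - πb (br A C) = -(br A (πk X) + πb (br A C))
    have : E = -(1 / 2 : ℝ) • πb (br A C) - br A (πk X) := by
      have h2 : E = ((1 / 2 : ℝ) • πb (br A C) + E - πb (br A C))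
          + (1 / 2 : ℝ) • πb (br A C) := by module
      rw [h2, hkey]; module
    exact this
  · rintro ⟨h0, hEeq⟩ t
    have hGX : G = - br A X := by
      have hbAX : br A X = br A (πk X) + br A C := by
        conv_lhs => rw [← hsum X, ← h0]
        rw [map_add]
      rw [hG, hEeq, hbAX]; module
    have hintegrand : (fun s : ℝ => (NormedSpace.exp ((-s) • T)) G)
        = fun s : ℝ => -((NormedSpace.exp ((-s) • T)) (T X)) := by
      funext s; rw [hGX, hTapp, map_neg]
    rw [hintegrand, intervalIntegral.integral_neg, aux_int]
    have : C + -(X - (NormedSpace.exp ((-t) • T)) X)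
        = (NormedSpace.exp ((-t) • T)) X + (C - X) := by abel
    rw [this, map_add, map_sub, hπbC, ← h0]
    simp
end

section
/- Let m be a finite-dimensional real Lie algebra equipped with a norm making it a normed real vector space. Let k and b be submodules with m = k ⊕ b (internal direct sum) and projections π_k, π_b. Suppose A, V, V* ∈ b, D, D* ∈ k and λ ∈ ℝ with λ ≠ 0 satisfy ⁅A, V⁆ = −λ V* + D*, ⁅A, V*⁆ = λ V + D, ⁅A, D⁆ = 0 and ⁅A, D*⁆ = 0. Then for all t ∈ ℝ: π_b ( ∫₀ᵗ exp(−s · ad_A) V ds ) = (sin(λ t)/λ) · V − ((1 − cos(λ t))/λ²) · π_b⁅A, V⁆. In particular, this expression vanishes whenever t = 2kπ/λ with k ∈ ℤ. -/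
open NormedSpace Nat in
set_option maxHeartbeats 1000000 in
lemma exp_rot_aux {m : Type*} [NormedAddCommGroup m] [NormedSpace ℝ m] [CompleteSpace m]
    (T : m →L[ℝ] m) (μ : ℝ) (x y : m) (hx : T x = μ • y) (hy : T y = -μ • x) :
    NormedSpace.exp T x = Real.cos μ • x + Real.sin μ • y := by
  have hpow : ∀ n : ℕ, (T ^ (2 * n)) x = ((-1 : ℝ) ^ n * μ ^ (2 * n)) • x ∧
      (T ^ (2 * n + 1)) x = ((-1 : ℝ) ^ n * μ ^ (2 * n + 1)) • y := by
    intro n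
    induction n with
    | zero => simp [hx]
    | succ n ih =>
      obtain ⟨ih1, ih2⟩ := ih
      have e1 : 2 * (n + 1) = (2 * n + 1) + 1 := by ring
      have h1 : (T ^ (2 * (n + 1))) x = ((-1 : ℝ) ^ (n + 1) * μ ^ (2 * (n + 1))) • x := by
        rw [e1, _root_.pow_succ', ContinuousLinearMap.mul_apply, ih2, map_smul, hy, smul_smul]
        congr 1; ring
      refine ⟨h1, ?_⟩
      rw [_root_.pow_succ', ContinuousLinearMap.mul_apply, h1, map_smul, hx, smul_smul]
      congr 1; ring
  have hexp : HasSum (fun n : ℕ => ((n ! : ℝ)⁻¹ • T ^ n) x) (NormedSpace.exp T x) :=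
    (NormedSpace.exp_series_hasSum_exp' (𝕂 := ℝ) T).mapL (ContinuousLinearMap.apply ℝ m x)
  have heven : HasSum (fun n : ℕ => (((2 * n)! : ℝ)⁻¹ • T ^ (2 * n)) x)
      (Real.cos μ • x) := by
    have := (Real.hasSum_cos μ).smul_const x
    convert this using 2 with n
    rw [ContinuousLinearMap.smul_apply, (hpow n).1, smul_smul]
    congr 1
    field_simp
  have hodd : HasSum (fun n : ℕ => (((2 * n + 1)! : ℝ)⁻¹ • T ^ (2 * n + 1)) x)
      (Real.sin μ • y) := by
    have := (Real.hasSum_sin μ).smul_const y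
    convert this using 2 with n
    rw [ContinuousLinearMap.smul_apply, (hpow n).2, smul_smul]
    congr 1
    field_simp
  exact hexp.unique (HasSum.even_add_odd (f := fun n : ℕ => ((n ! : ℝ)⁻¹ • T ^ n) x) heven hodd)

set_option maxHeartbeats 1000000 in
theorem stmt10
    {m : Type*} [NormedAddCommGroup m] [NormedSpace ℝ m] [FiniteDimensional ℝ m]
    -- the Lie bracket of `m`, as a bilinear map
    (br : m →ₗ[ℝ] m →ₗ[ℝ] m)
    (halt : ∀ x : m, br x x = 0)
    (hjac : ∀ x y z : m, br x (br y z) = br (br x y) z + br y (br x z))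
    (k b : Submodule ℝ m) (hcompl : IsCompl k b)
    (πk πb : m →ₗ[ℝ] m)
    (hsum : ∀ x : m, πk x + πb x = x)
    (hπk_mem : ∀ x : m, πk x ∈ k) (hπb_mem : ∀ x : m, πb x ∈ b)
    (hπk_id : ∀ x ∈ k, πk x = x) (hπb_id : ∀ x ∈ b, πb x = x)
    (A V Vs : m) (hA : A ∈ b) (hV : V ∈ b) (hVs : Vs ∈ b)
    (D Ds : m) (hD : D ∈ k) (hDs : Ds ∈ k)
    (lam : ℝ) (hlam : lam ≠ 0)
    (h1 : br A V = -lam • Vs + Ds) (h2 : br A Vs = lam • V + D)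
    (h3 : br A D = 0) (h4 : br A Ds = 0) :
    (∀ t : ℝ,
      πb (∫ s in (0:ℝ)..t,
          (NormedSpace.exp ((-s) • (br A).toContinuousLinearMap)) V)
        = (Real.sin (lam * t) / lam) • V
          - ((1 - Real.cos (lam * t)) / lam ^ 2) • πb (br A V)) ∧
    (∀ kk : ℤ,
      πb (∫ s in (0:ℝ)..(2 * (kk : ℝ) * Real.pi / lam),
          (NormedSpace.exp ((-s) • (br A).toContinuousLinearMap)) V) = 0) := by
  set adA := (br A).toContinuousLinearMap with hadA
  have hadA_apply : ∀ x : m, adA x = br A x := fun x => LinearMap.coe_toContinuousLinearMap' (br A) ▸ rfl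
  set W : m := V + lam⁻¹ • D with hWdef
  set Ws : m := Vs - lam⁻¹ • Ds with hWsdef
  -- key exponential formula
  have hexpW : ∀ s : ℝ, (NormedSpace.exp ((-s) • adA)) W
      = Real.cos (lam * s) • W + Real.sin (lam * s) • Ws := by
    intro s
    apply exp_rot_aux
    · rw [ContinuousLinearMap.smul_apply, hadA_apply]
      rw [hWdef, map_add, map_smul, h1, h3]
      rw [hWsdef]
      match_scalars <;> field_simp <;> ring
    · rw [ContinuousLinearMap.smul_apply, hadA_apply]
      rw [hWsdef, map_sub, map_smul, h2, h4]
      rw [hWdef]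
      match_scalars <;> field_simp <;> ring
  have hexpD : ∀ s : ℝ, (NormedSpace.exp ((-s) • adA)) D = D := by
    intro s
    have := exp_rot_aux ((-s) • adA) 0 D D ?_ ?_
    · simpa using this
    · simp [ContinuousLinearMap.smul_apply, hadA_apply, h3]
    · simp [ContinuousLinearMap.smul_apply, hadA_apply, h3]
  have hexpV : ∀ s : ℝ, (NormedSpace.exp ((-s) • adA)) V
      = Real.cos (lam * s) • W + Real.sin (lam * s) • Ws - lam⁻¹ • D := by
    intro s
    have hV' : V = W - lam⁻¹ • D := by rw [hWdef]; abel
    rw [hV', map_sub, map_smul, hexpW s, hexpD s]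
  -- projections
  have hπb_k : ∀ x ∈ k, πb x = 0 := by
    intro x hx
    have hthis := hsum x
    rw [hπk_id x hx] at hthis
    exact add_eq_left.mp hthis
  have hπbD : πb D = 0 := hπb_k D hD
  have hπbDs : πb Ds = 0 := hπb_k Ds hDs
  have hπbW : πb W = V := by
    rw [hWdef, map_add, map_smul, hπb_id V hV, hπbD, smul_zero, add_zero]
  have hπbWs : πb Ws = Vs := by
    rw [hWsdef, map_sub, map_smul, hπb_id Vs hVs, hπbDs, smul_zero, sub_zero]
  have hπbAV : πb (br A V) = (-lam) • Vs := by
    rw [h1, map_add, map_smul, hπb_id Vs hVs, hπbDs, add_zero]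
  -- integrals of cos and sin
  have hIcos : ∀ t : ℝ, (∫ s in (0:ℝ)..t, Real.cos (lam * s)) = Real.sin (lam * t) / lam := by
    intro t
    have := intervalIntegral.integral_comp_mul_left (a := (0:ℝ)) (b := t)
      (fun x => Real.cos x) hlam
    rw [this]
    simp [integral_cos, div_eq_inv_mul]
  have hIsin : ∀ t : ℝ, (∫ s in (0:ℝ)..t, Real.sin (lam * s))
      = (1 - Real.cos (lam * t)) / lam := by
    intro t
    have := intervalIntegral.integral_comp_mul_left (a := (0:ℝ)) (b := t)
      (fun x => Real.sin x) hlam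
    rw [this]
    simp [integral_sin, div_eq_inv_mul]
  have key : ∀ t : ℝ,
      πb (∫ s in (0:ℝ)..t, (NormedSpace.exp ((-s) • adA)) V)
        = (Real.sin (lam * t) / lam) • V + ((1 - Real.cos (lam * t)) / lam) • Vs := by
    intro t
    have hint : (∫ s in (0:ℝ)..t, (NormedSpace.exp ((-s) • adA)) V)
        = (Real.sin (lam * t) / lam) • W + ((1 - Real.cos (lam * t)) / lam) • Ws
          - t • lam⁻¹ • D := by
      rw [intervalIntegral.integral_congr (g := fun s =>
        Real.cos (lam * s) • W + Real.sin (lam * s) • Ws - lam⁻¹ • D)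
        (fun s _ => hexpV s)]
      have hc : IntervalIntegrable (fun s => Real.cos (lam * s) • W)
          MeasureTheory.volume 0 t :=
        (((Real.continuous_cos.comp (continuous_const.mul continuous_id)).smul
          continuous_const)).intervalIntegrable 0 t
      have hs : IntervalIntegrable (fun s => Real.sin (lam * s) • Ws)
          MeasureTheory.volume 0 t :=
        (((Real.continuous_sin.comp (continuous_const.mul continuous_id)).smul
          continuous_const)).intervalIntegrable 0 t
      rw [intervalIntegral.integral_sub (hc.add hs) (intervalIntegrable_const),
        intervalIntegral.integral_add hc hs,
        intervalIntegral.integral_smul_const, intervalIntegral.integral_smul_const,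
        intervalIntegral.integral_const, hIcos t, hIsin t, sub_zero]
    rw [hint, map_sub, map_add, map_smul, map_smul, map_smul, map_smul,
      hπbW, hπbWs, hπbD, smul_zero, smul_zero, sub_zero]
  constructor
  · intro t
    rw [key t, hπbAV, smul_smul]
    match_scalars <;> field_simp <;> ring
  · intro kk
    rw [key (2 * (kk : ℝ) * Real.pi / lam)]
    have harg : lam * (2 * (kk : ℝ) * Real.pi / lam) = (kk : ℤ) * (2 * Real.pi) := by
      field_simp
    rw [harg]
    have hs0 : Real.sin ((kk : ℝ) * (2 * Real.pi)) = 0 := by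
      have : ((kk : ℝ) * (2 * Real.pi)) = ((2 * kk : ℤ) : ℝ) * Real.pi := by push_cast; ring
      rw [this, Real.sin_int_mul_pi]
    rw [hs0, Real.cos_int_mul_two_pi, zero_div, sub_self, zero_div, zero_smul, zero_smul,
      add_zero]
end

section
/- Let m be a finite-dimensional real Lie algebra equipped with a norm making it a normed real vector space. Let k and b be submodules with m = k ⊕ b (internal direct sum) and projections π_k, π_b, and assume ⁅x, y⁆ ∈ b whenever x ∈ k and y ∈ b. Let A ∈ b and X ∈ m, and define H : ℝ → m by H(t) := π_b ( exp(−t · ad_A) X ). Then H is twice differentiable and satisfies, for all t ∈ ℝ: H″(t) + π_b⁅A, H′(t)⁆ − ⁅A, π_k⁅A, H(t)⁆⁆ = 0. (Every isotropic/Killing field along the geodesic t ↦ U exp(tA) of a naturally reductive homogeneous space satisfies the Jacobi field equation.) -/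
open NormedSpace

theorem stmt11
    {m : Type*} [NormedAddCommGroup m] [NormedSpace ℝ m] [FiniteDimensional ℝ m]
    -- the Lie bracket of `m`, as a bilinear map
    (br : m →ₗ[ℝ] m →ₗ[ℝ] m)
    (halt : ∀ x : m, br x x = 0)
    (hjac : ∀ x y z : m, br x (br y z) = br (br x y) z + br y (br x z))
    (k b : Submodule ℝ m) (hcompl : IsCompl k b)
    (πk πb : m →ₗ[ℝ] m)
    (hsum : ∀ x : m, πk x + πb x = x)
    (hπk_mem : ∀ x : m, πk x ∈ k) (hπb_mem : ∀ x : m, πb x ∈ b)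
    (hπk_id : ∀ x ∈ k, πk x = x) (hπb_id : ∀ x ∈ b, πb x = x)
    (hred : ∀ x ∈ k, ∀ y ∈ b, br x y ∈ b)
    (A : m) (hA : A ∈ b) (X : m)
    (H : ℝ → m)
    (hH : ∀ t : ℝ, H t = πb ((NormedSpace.exp ((-t) • (br A).toContinuousLinearMap)) X)) :
    ∃ H' H'' : ℝ → m,
      (∀ t : ℝ, HasDerivAt H (H' t) t) ∧
      (∀ t : ℝ, HasDerivAt H' (H'' t) t) ∧
      ∀ t : ℝ, H'' t + πb (br A (H' t)) - br A (πk (br A (H t))) = 0 := by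
  classical
  -- antisymmetry of the bracket
  have hanti : ∀ x y : m, br x y = - br y x := by
    intro x y
    have h := halt (x + y)
    simp only [map_add, LinearMap.add_apply, halt, zero_add, add_zero] at h
    exact eq_neg_of_add_eq_zero_right h
  -- πk vanishes on b
  have hπk0 : ∀ z ∈ b, πk z = 0 := by
    intro z hz
    have h1 := hsum z
    rw [hπb_id z hz] at h1
    simpa using h1
  -- [A, πk w] ∈ b for any w
  have hAk : ∀ w : m, br A (πk w) ∈ b := by
    intro w
    rw [hanti A (πk w)]
    exact b.neg_mem (hred _ (hπk_mem w) A hA)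
  set T : m →L[ℝ] m := (br A).toContinuousLinearMap with hT
  set N : m →L[ℝ] m := -T with hN
  set F : ℝ → m := fun t => exp (t • N) X with hF
  have hFN : ∀ t : ℝ, exp ((-t) • (br A).toContinuousLinearMap) = exp (t • N) := by
    intro t
    rw [hN, smul_neg, neg_smul]
  -- derivative of F
  have hFderiv : ∀ t : ℝ, HasDerivAt F (N (F t)) t := by
    intro t
    have h1 : HasDerivAt (fun u : ℝ => exp (u • N)) (N * exp (t • N)) t :=
      hasDerivAt_exp_smul_const' N t
    have h2 := h1.clm_apply (hasDerivAt_const t X)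
    simpa using h2
  set πbL : m →L[ℝ] m := πb.toContinuousLinearMap with hπbL
  refine ⟨fun t => πb (N (F t)), fun t => πb (N (N (F t))), ?_, ?_, ?_⟩
  · intro t
    have : HasDerivAt (fun t => πbL (F t)) (πbL (N (F t))) t :=
      (πbL.hasFDerivAt.comp_hasDerivAt t (hFderiv t))
    have hEq : H = fun t => πbL (F t) := by
      funext s
      rw [hH s, hFN s]
      rfl
    rw [hEq]
    exact this
  · intro t
    have hF' : HasDerivAt (fun t => N (F t)) (N (N (F t))) t :=
      N.hasFDerivAt.comp_hasDerivAt t (hFderiv t)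
    exact (πbL.hasFDerivAt.comp_hasDerivAt t hF' : _)
  · intro t
    set Y : m := F t with hY
    have hHt : H t = πb Y := by rw [hH t, hFN t]
    have hNY : ∀ z : m, N z = - br A z := by
      intro z; simp [hN, hT]
    -- key identity (3): πk (br A Y) = πk (br A (πb Y))
    have key3 : πk (br A Y) = πk (br A (πb Y)) := by
      have hYd : Y = πk Y + πb Y := (hsum Y).symm
      have : br A Y = br A (πk Y) + br A (πb Y) := by
        conv_lhs => rw [hYd]
        simp
      rw [this, map_add, hπk0 _ (hAk Y), zero_add]
    -- key identity (2): πb (br A (πk w)) = br A (πk w)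
    have key2 : ∀ w : m, πb (br A (πk w)) = br A (πk w) := fun w => hπb_id _ (hAk w)
    -- decompose πb (br A (br A Y))
    have hdec : πb (br A (br A Y)) =
        br A (πk (br A Y)) + πb (br A (πb (br A Y))) := by
      have h1 : br A Y = πk (br A Y) + πb (br A Y) := (hsum _).symm
      calc πb (br A (br A Y))
          = πb (br A (πk (br A Y) + πb (br A Y))) := by rw [← h1]
        _ = πb (br A (πk (br A Y))) + πb (br A (πb (br A Y))) := by simp
        _ = br A (πk (br A Y)) + πb (br A (πb (br A Y))) := by rw [key2]
    -- now compute everything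
    have e1 : πb (N (N Y)) = πb (br A (br A Y)) := by
      rw [hNY, hNY]; simp
    have e2 : πb (br A (πb (N Y))) = - πb (br A (πb (br A Y))) := by
      rw [hNY]; simp
    rw [hHt]
    show πb (N (N Y)) + πb (br A (πb (N Y))) - br A (πk (br A (πb Y))) = 0
    rw [e1, e2, hdec, key3]
    abel
end

section
/- Let 𝔄 be a real Banach algebra (for instance, the algebra of n × n real matrices), and let f : ℕ → ℝ be a sequence of coefficients such that Σ_n |f(n)| rⁿ converges for every r ≥ 0 (i.e. x ↦ Σ f(n) xⁿ is entire). For x, e ∈ 𝔄 define the Fréchet-derivative series L_f(x, e) := Σ_{n≥1} f(n) · ( Σ_{a+b = n−1} xᵃ e xᵇ ) and the derived series f'(x) := Σ_{n≥0} (n+1) f(n+1) · xⁿ. Then for all A, E ∈ 𝔄, the map t ↦ L_f(t·A, t·E) from ℝ to 𝔄 is differentiable at every t, with derivative A · L_{f'}(t·A, t·E) + E · f'(t·A). -/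
/-- The Fréchet-derivative series `L_f(x, e) = Σ_{n ≥ 1} f(n) Σ_{a+b=n-1} xᵃ e xᵇ`
of an entire power series `f` in a Banach algebra. -/
noncomputable def frechetSeries {𝔸 : Type*} [NormedRing 𝔸] [NormedAlgebra ℝ 𝔸]
    (f : ℕ → ℝ) (x e : 𝔸) : 𝔸 :=
  ∑' n : ℕ, f (n + 1) • (∑ i ∈ Finset.range (n + 1), x ^ i * e * x ^ (n - i))

/-- The evaluation `Σ_{n ≥ 0} c(n) xⁿ` of a power series with coefficients `c`
at an element of a Banach algebra. -/
noncomputable def coeffSeries {𝔸 : Type*} [NormedRing 𝔸] [NormedAlgebra ℝ 𝔸]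
    (c : ℕ → ℝ) (x : 𝔸) : 𝔸 :=
  ∑' n : ℕ, c n • x ^ n

/-- auxiliary: `C n = Σ_{i ≤ n} Aⁱ E Aⁿ⁻ⁱ`. -/
noncomputable def Cseq {𝔸 : Type*} [NormedRing 𝔸] (A E : 𝔸) (n : ℕ) : 𝔸 :=
  ∑ i ∈ Finset.range (n + 1), A ^ i * E * A ^ (n - i)

section aux
variable {𝔸 : Type*} [NormedRing 𝔸] [NormedAlgebra ℝ 𝔸]

lemma Cseq_zero (A E : 𝔸) : Cseq A E 0 = E := by
  simp [Cseq]

lemma Cseq_succ (A E : 𝔸) (n : ℕ) : Cseq A E (n + 1) = A * Cseq A E n + E * A ^ (n + 1) := by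
  rw [Cseq, Finset.sum_range_succ', Cseq, Finset.mul_sum]
  congr 1
  · refine Finset.sum_congr rfl fun i hi => ?_
    have hi' : i ≤ n := Nat.lt_succ_iff.mp (Finset.mem_range.mp hi)
    rw [show n + 1 - (i + 1) = n - i by omega, pow_succ', mul_assoc, mul_assoc, mul_assoc]
  · simp

lemma frechet_rewrite (c : ℕ → ℝ) (A E : 𝔸) (s : ℝ) :
    frechetSeries c (s • A) (s • E) = ∑' n : ℕ, (c (n + 1) * s ^ (n + 1)) • Cseq A E n := by
  unfold frechetSeries
  refine tsum_congr fun n => ?_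
  rw [← smul_smul]
  congr 1
  rw [Cseq, Finset.smul_sum]
  refine Finset.sum_congr rfl fun i hi => ?_
  have hi' : i ≤ n := Nat.lt_succ_iff.mp (Finset.mem_range.mp hi)
  simp only [smul_pow, smul_mul_assoc, mul_smul_comm, smul_smul]
  congr 1
  rw [show n + 1 = i + (1 + (n - i)) by omega, pow_add, pow_add, pow_one]
  ring

lemma coeff_rewrite (c : ℕ → ℝ) (A : 𝔸) (s : ℝ) :
    coeffSeries c (s • A) = ∑' n : ℕ, (c n * s ^ n) • A ^ n := by
  unfold coeffSeries
  exact tsum_congr fun n => by rw [smul_pow, smul_smul]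

lemma pow_norm_le (A : 𝔸) (i : ℕ) : ‖A ^ i‖ ≤ (‖(1 : 𝔸)‖ + 1) * (‖A‖ + 1) ^ i := by
  cases i with
  | zero => simpa using by linarith [norm_nonneg (1 : 𝔸)]
  | succ m =>
    calc ‖A ^ (m + 1)‖ ≤ ‖A‖ ^ (m + 1) := norm_pow_le' A (Nat.succ_pos m)
      _ ≤ (‖A‖ + 1) ^ (m + 1) := pow_le_pow_left₀ (norm_nonneg A) (by linarith) _
      _ ≤ (‖(1 : 𝔸)‖ + 1) * (‖A‖ + 1) ^ (m + 1) :=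
          le_mul_of_one_le_left (by positivity) (by linarith [norm_nonneg (1 : 𝔸)])

lemma Cseq_norm (A E : 𝔸) (n : ℕ) :
    ‖Cseq A E n‖ ≤ ((‖(1 : 𝔸)‖ + 1) ^ 2 * ‖E‖) * (((n : ℝ) + 1) * (‖A‖ + 1) ^ n) := by
  set K1 := ‖(1 : 𝔸)‖ + 1 with hK1
  set M := ‖A‖ + 1 with hM
  have hK1' : (0:ℝ) ≤ K1 := by positivity
  have hM' : (0:ℝ) ≤ M := by positivity
  calc ‖Cseq A E n‖ ≤ ∑ i ∈ Finset.range (n + 1), ‖A ^ i * E * A ^ (n - i)‖ :=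
        norm_sum_le _ _
    _ ≤ ∑ i ∈ Finset.range (n + 1), (K1 ^ 2 * ‖E‖) * M ^ n := by
        refine Finset.sum_le_sum fun i hi => ?_
        have hi' : i ≤ n := Nat.lt_succ_iff.mp (Finset.mem_range.mp hi)
        calc ‖A ^ i * E * A ^ (n - i)‖ ≤ ‖A ^ i * E‖ * ‖A ^ (n - i)‖ := norm_mul_le _ _
          _ ≤ (‖A ^ i‖ * ‖E‖) * ‖A ^ (n - i)‖ :=
              mul_le_mul_of_nonneg_right (norm_mul_le _ _) (norm_nonneg _)
          _ ≤ ((K1 * M ^ i) * ‖E‖) * (K1 * M ^ (n - i)) := by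
              gcongr <;> [exact pow_norm_le A i; exact pow_norm_le A (n - i)]
          _ = (K1 ^ 2 * ‖E‖) * (M ^ i * M ^ (n - i)) := by ring
          _ = (K1 ^ 2 * ‖E‖) * M ^ n := by
              rw [← pow_add, Nat.add_sub_cancel' hi']
    _ = (K1 ^ 2 * ‖E‖) * (((n : ℝ) + 1) * M ^ n) := by
        rw [Finset.sum_const, Finset.card_range, nsmul_eq_mul]
        push_cast; ring

lemma entire_aux (f : ℕ → ℝ) (hf : ∀ r : ℝ, 0 ≤ r → Summable fun n : ℕ => |f n| * r ^ n)
    (k : ℕ) (r : ℝ) (hr : 0 ≤ r) :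
    Summable fun n : ℕ => ((n : ℝ) + 1) ^ 2 * |f (n + k)| * r ^ n := by
  have hR : (0:ℝ) < 4 * (r + 1) := by linarith
  have h1 : Summable fun n : ℕ => |f (n + k)| * (4 * (r + 1)) ^ (n + k) :=
    (summable_nat_add_iff k).2 (hf _ hR.le)
  refine h1.of_nonneg_of_le (fun n => by positivity) fun n => ?_
  have h2 : ((n : ℝ) + 1) ≤ 2 ^ n := by exact_mod_cast Nat.lt_two_pow_self (n := n)
  have h3 : ((n : ℝ) + 1) ^ 2 ≤ 4 ^ n := by
    calc ((n : ℝ) + 1) ^ 2 ≤ (2 ^ n) ^ 2 := pow_le_pow_left₀ (by positivity) h2 2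
      _ = 4 ^ n := by rw [pow_right_comm]; norm_num
  have h4 : r ^ n ≤ (r + 1) ^ n := pow_le_pow_left₀ hr (by linarith) n
  have h5 : (4 * (r + 1)) ^ n ≤ (4 * (r + 1)) ^ (n + k) :=
    pow_le_pow_right₀ (by linarith) (Nat.le_add_right n k)
  calc ((n : ℝ) + 1) ^ 2 * |f (n + k)| * r ^ n
      = |f (n + k)| * (((n : ℝ) + 1) ^ 2 * r ^ n) := by ring
    _ ≤ |f (n + k)| * (4 * (r + 1)) ^ (n + k) := by
        refine mul_le_mul_of_nonneg_left ?_ (abs_nonneg _)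
        calc ((n : ℝ) + 1) ^ 2 * r ^ n ≤ 4 ^ n * (r + 1) ^ n :=
              mul_le_mul h3 h4 (by positivity) (by positivity)
          _ = (4 * (r + 1)) ^ n := (mul_pow _ _ _).symm
          _ ≤ _ := h5

lemma summable_of_bound [CompleteSpace 𝔸] (f : ℕ → ℝ)
    (hf : ∀ r : ℝ, 0 ≤ r → Summable fun n : ℕ => |f n| * r ^ n)
    (k : ℕ) (B r : ℝ) (hr : 0 ≤ r) (v : ℕ → 𝔸)
    (h : ∀ n, ‖v n‖ ≤ B * (((n : ℝ) + 1) ^ 2 * |f (n + k)| * r ^ n)) : Summable v :=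
  Summable.of_norm (((entire_aux f hf k r hr).mul_left B).of_nonneg_of_le
    (fun n => norm_nonneg _) h)

end aux

theorem stmt12
    {𝔸 : Type*} [NormedRing 𝔸] [NormedAlgebra ℝ 𝔸] [CompleteSpace 𝔸]
    (f : ℕ → ℝ) (hf : ∀ r : ℝ, 0 ≤ r → Summable fun n : ℕ => |f n| * r ^ n)
    (A E : 𝔸) (t : ℝ) :
    HasDerivAt (fun s : ℝ => frechetSeries f (s • A) (s • E))
      (A * frechetSeries (fun n : ℕ => ((n : ℝ) + 1) * f (n + 1)) (t • A) (t • E)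
        + E * coeffSeries (fun n : ℕ => ((n : ℝ) + 1) * f (n + 1)) (t • A)) t := by
  set D : ℕ → ℝ := fun n : ℕ => ((n : ℝ) + 1) * f (n + 1) with hD
  set K1 : ℝ := ‖(1 : 𝔸)‖ + 1 with hK1
  set M : ℝ := ‖A‖ + 1 with hM
  set K : ℝ := K1 ^ 2 * ‖E‖ with hK
  set r : ℝ := |t| + 1 with hr
  have hK1' : (0:ℝ) ≤ K1 := by rw [hK1]; positivity
  have hM' : (0:ℝ) ≤ M := by rw [hM]; positivity
  have hK' : (0:ℝ) ≤ K := by rw [hK]; positivity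
  have hr' : (0:ℝ) < r := by rw [hr]; positivity
  have hrM : (0:ℝ) ≤ r * M := by positivity
  have hCn : ∀ n : ℕ, ‖Cseq A E n‖ ≤ K * (((n : ℝ) + 1) * M ^ n) := Cseq_norm A E
  have hDabs : ∀ n : ℕ, |D n| = ((n : ℝ) + 1) * |f (n + 1)| := by
    intro n
    rw [hD, abs_mul, abs_of_nonneg (by positivity : (0:ℝ) ≤ (n : ℝ) + 1)]
  -- summability of the various series
  have hsL : Summable fun n : ℕ => (D n * t ^ n) • Cseq A E n := by
    refine summable_of_bound f hf 1 (K * r) (r * M) hrM _ fun n => ?_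
    calc ‖(D n * t ^ n) • Cseq A E n‖ = |D n| * |t| ^ n * ‖Cseq A E n‖ := by
          rw [norm_smul, Real.norm_eq_abs, abs_mul, abs_pow]
      _ ≤ (((n : ℝ) + 1) * |f (n + 1)|) * r ^ n * (K * (((n : ℝ) + 1) * M ^ n)) := by
          rw [hDabs]
          gcongr
          · rw [hr]; linarith [abs_nonneg t]
          · exact hCn n
      _ = K * (((n : ℝ) + 1) ^ 2 * |f (n + 1)| * (r * M) ^ n) := by rw [mul_pow]; ring
      _ ≤ (K * r) * (((n : ℝ) + 1) ^ 2 * |f (n + 1)| * (r * M) ^ n) := by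
          have h1 : (1:ℝ) ≤ r := by rw [hr]; linarith [abs_nonneg t]
          exact mul_le_mul_of_nonneg_right (le_mul_of_one_le_right hK' h1) (by positivity)
  have h1r : (1:ℝ) ≤ r := by rw [hr]; linarith [abs_nonneg t]
  have htr : |t| ≤ r := by rw [hr]; linarith
  have hDabs2 : ∀ n : ℕ, |D (n + 1)| = ((n : ℝ) + 2) * |f (n + 2)| := by
    intro n; rw [hDabs]; push_cast; ring
  have hbig : ∀ (n : ℕ) (v : 𝔸) (Bv : ℝ), 0 ≤ Bv → ‖v‖ ≤ Bv * (((n : ℝ) + 1) * M ^ n) →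
      ‖(D (n + 1) * t ^ (n + 1)) • v‖
        ≤ (2 * Bv * r) * (((n : ℝ) + 1) ^ 2 * |f (n + 2)| * (r * M) ^ n) := by
    intro n v Bv hBv hv
    calc ‖(D (n + 1) * t ^ (n + 1)) • v‖ = |D (n + 1)| * |t| ^ (n + 1) * ‖v‖ := by
          rw [norm_smul, Real.norm_eq_abs, abs_mul, abs_pow]
      _ ≤ (((n : ℝ) + 2) * |f (n + 2)|) * r ^ (n + 1) * (Bv * (((n : ℝ) + 1) * M ^ n)) := by
          rw [hDabs2]
          gcongr
      _ ≤ (2 * (((n : ℝ) + 1) * |f (n + 2)|)) * r ^ (n + 1) * (Bv * (((n : ℝ) + 1) * M ^ n)) := by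
          gcongr ?_ * _ * _
          nlinarith [abs_nonneg (f (n + 2)), Nat.cast_nonneg (α := ℝ) n]
      _ = (2 * Bv * r) * (((n : ℝ) + 1) ^ 2 * |f (n + 2)| * (r ^ n * M ^ n)) := by
          rw [pow_succ]; ring
      _ = (2 * Bv * r) * (((n : ℝ) + 1) ^ 2 * |f (n + 2)| * (r * M) ^ n) := by rw [mul_pow]
  have hCA : ∀ n : ℕ, ‖A * Cseq A E n‖ ≤ (‖A‖ * K) * (((n : ℝ) + 1) * M ^ n) := by
    intro n
    calc ‖A * Cseq A E n‖ ≤ ‖A‖ * ‖Cseq A E n‖ := norm_mul_le _ _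
      _ ≤ ‖A‖ * (K * (((n : ℝ) + 1) * M ^ n)) :=
          mul_le_mul_of_nonneg_left (hCn n) (norm_nonneg A)
      _ = (‖A‖ * K) * (((n : ℝ) + 1) * M ^ n) := by ring
  have hEA : ∀ n : ℕ, ‖E * A ^ n‖ ≤ (‖E‖ * K1) * M ^ n := by
    intro n
    calc ‖E * A ^ n‖ ≤ ‖E‖ * ‖A ^ n‖ := norm_mul_le _ _
      _ ≤ ‖E‖ * (K1 * M ^ n) := mul_le_mul_of_nonneg_left (pow_norm_le A n) (norm_nonneg E)
      _ = (‖E‖ * K1) * M ^ n := by ring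
  have hEA' : ∀ n : ℕ, ‖E * A ^ (n + 1)‖ ≤ (‖E‖ * K1 * M) * (((n : ℝ) + 1) * M ^ n) := by
    intro n
    calc ‖E * A ^ (n + 1)‖ ≤ (‖E‖ * K1) * M ^ (n + 1) := hEA (n + 1)
      _ = (‖E‖ * K1 * M) * (1 * M ^ n) := by rw [pow_succ]; ring
      _ ≤ (‖E‖ * K1 * M) * (((n : ℝ) + 1) * M ^ n) := by
          gcongr
          linarith [Nat.cast_nonneg (α := ℝ) n]
  have hsA : Summable fun n : ℕ => (D (n + 1) * t ^ (n + 1)) • (A * Cseq A E n) :=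
    summable_of_bound f hf 2 (2 * (‖A‖ * K) * r) (r * M) hrM _ fun n =>
      hbig n _ _ (by positivity) (hCA n)
  have hsE2 : Summable fun n : ℕ => (D (n + 1) * t ^ (n + 1)) • (E * A ^ (n + 1)) :=
    summable_of_bound f hf 2 (2 * (‖E‖ * K1 * M) * r) (r * M) hrM _ fun n =>
      hbig n _ _ (by positivity) (hEA' n)
  have hsF : Summable fun n : ℕ => (D (n + 1) * t ^ (n + 1)) • Cseq A E n :=
    summable_of_bound f hf 2 (2 * K * r) (r * M) hrM _ fun n =>
      hbig n _ _ hK' (hCn n)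
  have hsE1 : Summable fun n : ℕ => (D n * t ^ n) • (E * A ^ n) := by
    refine summable_of_bound f hf 1 (‖E‖ * K1) (r * M) hrM _ fun n => ?_
    calc ‖(D n * t ^ n) • (E * A ^ n)‖ = |D n| * |t| ^ n * ‖E * A ^ n‖ := by
          rw [norm_smul, Real.norm_eq_abs, abs_mul, abs_pow]
      _ ≤ (((n : ℝ) + 1) * |f (n + 1)|) * r ^ n * ((‖E‖ * K1) * M ^ n) := by
          rw [hDabs]
          gcongr
          exact hEA n
      _ = (‖E‖ * K1) * ((((n : ℝ) + 1) * 1) * |f (n + 1)| * (r ^ n * M ^ n)) := by ring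
      _ ≤ (‖E‖ * K1) * (((n : ℝ) + 1) ^ 2 * |f (n + 1)| * (r ^ n * M ^ n)) := by
          gcongr
          · nlinarith [Nat.cast_nonneg (α := ℝ) n]
      _ = (‖E‖ * K1) * (((n : ℝ) + 1) ^ 2 * |f (n + 1)| * (r * M) ^ n) := by rw [mul_pow]
  have hsP : Summable fun n : ℕ => (D n * t ^ n) • A ^ n := by
    refine summable_of_bound f hf 1 K1 (r * M) hrM _ fun n => ?_
    calc ‖(D n * t ^ n) • A ^ n‖ = |D n| * |t| ^ n * ‖A ^ n‖ := by
          rw [norm_smul, Real.norm_eq_abs, abs_mul, abs_pow]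
      _ ≤ (((n : ℝ) + 1) * |f (n + 1)|) * r ^ n * (K1 * M ^ n) := by
          rw [hDabs]
          gcongr
          exact pow_norm_le A n
      _ = K1 * ((((n : ℝ) + 1) * 1) * |f (n + 1)| * (r ^ n * M ^ n)) := by ring
      _ ≤ K1 * (((n : ℝ) + 1) ^ 2 * |f (n + 1)| * (r ^ n * M ^ n)) := by
          gcongr
          · nlinarith [Nat.cast_nonneg (α := ℝ) n]
      _ = K1 * (((n : ℝ) + 1) ^ 2 * |f (n + 1)| * (r * M) ^ n) := by rw [mul_pow]
  have hderiv : ∀ (n : ℕ) (y : ℝ),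
      HasDerivAt (fun s : ℝ => (f (n + 1) * s ^ (n + 1)) • Cseq A E n)
        ((D n * y ^ n) • Cseq A E n) y := by
    intro n y
    have h1 : HasDerivAt (fun s : ℝ => f (n + 1) * s ^ (n + 1)) (D n * y ^ n) y := by
      have h2 := (hasDerivAt_pow (n + 1) y).const_mul (f (n + 1))
      refine h2.congr_deriv ?_
      rw [hD]
      push_cast [Nat.add_sub_cancel]
      ring
    exact h1.smul_const (Cseq A E n)
  have hball : ∀ (n : ℕ) (y : ℝ), y ∈ Metric.ball (0 : ℝ) r →
      ‖(D n * y ^ n) • Cseq A E n‖ ≤ (K * r) * (((n : ℝ) + 1) ^ 2 * |f (n + 1)| * (r * M) ^ n) := by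
    intro n y hy
    have hyr : |y| ≤ r := by
      rw [Metric.mem_ball, dist_zero_right, Real.norm_eq_abs] at hy
      exact hy.le
    calc ‖(D n * y ^ n) • Cseq A E n‖ = |D n| * |y| ^ n * ‖Cseq A E n‖ := by
          rw [norm_smul, Real.norm_eq_abs, abs_mul, abs_pow]
      _ ≤ (((n : ℝ) + 1) * |f (n + 1)|) * r ^ n * (K * (((n : ℝ) + 1) * M ^ n)) := by
          rw [hDabs]
          gcongr
          exact hCn n
      _ = K * (((n : ℝ) + 1) ^ 2 * |f (n + 1)| * (r * M) ^ n) := by rw [mul_pow]; ring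
      _ ≤ (K * r) * (((n : ℝ) + 1) ^ 2 * |f (n + 1)| * (r * M) ^ n) :=
          mul_le_mul_of_nonneg_right (le_mul_of_one_le_right hK' h1r) (by positivity)
  have hg0 : Summable fun n : ℕ => (f (n + 1) * t ^ (n + 1)) • Cseq A E n := by
    refine summable_of_bound f hf 1 (K * r) (r * M) hrM _ fun n => ?_
    calc ‖(f (n + 1) * t ^ (n + 1)) • Cseq A E n‖ = |f (n + 1)| * |t| ^ (n + 1) * ‖Cseq A E n‖ := by
          rw [norm_smul, Real.norm_eq_abs, abs_mul, abs_pow]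
      _ ≤ |f (n + 1)| * r ^ (n + 1) * (K * (((n : ℝ) + 1) * M ^ n)) := by
          gcongr
          exact hCn n
      _ = (K * r) * ((((n : ℝ) + 1) * 1) * |f (n + 1)| * (r ^ n * M ^ n)) := by
          rw [pow_succ]; ring
      _ ≤ (K * r) * (((n : ℝ) + 1) ^ 2 * |f (n + 1)| * (r ^ n * M ^ n)) := by
          gcongr
          · nlinarith [Nat.cast_nonneg (α := ℝ) n]
      _ = (K * r) * (((n : ℝ) + 1) ^ 2 * |f (n + 1)| * (r * M) ^ n) := by rw [mul_pow]
  have htball : t ∈ Metric.ball (0 : ℝ) r := by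
    rw [Metric.mem_ball, dist_zero_right, Real.norm_eq_abs, hr]
    linarith
  have hu : Summable fun n : ℕ =>
      (K * r) * (((n : ℝ) + 1) ^ 2 * |f (n + 1)| * (r * M) ^ n) :=
    (entire_aux f hf 1 (r * M) hrM).mul_left (K * r)
  have hD' : HasDerivAt (fun s : ℝ => ∑' n : ℕ, (f (n + 1) * s ^ (n + 1)) • Cseq A E n)
      (∑' n : ℕ, (D n * t ^ n) • Cseq A E n) t :=
    hasDerivAt_tsum_of_isPreconnected hu Metric.isOpen_ball
      (convex_ball (0 : ℝ) r).isPreconnected (fun n y _ => hderiv n y) hball htball hg0 htball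
  have hfun : (fun s : ℝ => frechetSeries f (s • A) (s • E))
      = fun s : ℝ => ∑' n : ℕ, (f (n + 1) * s ^ (n + 1)) • Cseq A E n :=
    funext fun s => frechet_rewrite f A E s
  have hRHS : A * frechetSeries D (t • A) (t • E) + E * coeffSeries D (t • A)
      = ∑' n : ℕ, (D n * t ^ n) • Cseq A E n := by
    have eA := (ContinuousLinearMap.mul ℝ 𝔸 A).map_tsum hsF
    have eE := (ContinuousLinearMap.mul ℝ 𝔸 E).map_tsum hsP
    simp only [ContinuousLinearMap.mul_apply'] at eA eE
    rw [frechet_rewrite D A E t, coeff_rewrite D A t, eA, eE]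
    simp only [mul_smul_comm]
    rw [hsL.tsum_eq_zero_add, hsE1.tsum_eq_zero_add]
    have hsplit : ∀ m : ℕ, (D (m + 1) * t ^ (m + 1)) • Cseq A E (m + 1)
        = (D (m + 1) * t ^ (m + 1)) • (A * Cseq A E m)
          + (D (m + 1) * t ^ (m + 1)) • (E * A ^ (m + 1)) := by
      intro m; rw [Cseq_succ, smul_add]
    rw [tsum_congr hsplit, hsA.tsum_add hsE2, Cseq_zero]
    rw [show E * A ^ 0 = E by rw [pow_zero, mul_one]]
    abel
  rw [hfun, hRHS]
  exact hD'
end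

section
/- Let n > p > 0 be integers, Y an n × p real matrix with Yᵀ Y = I_p, and η an n × p real matrix with Yᵀ η = 0. Define the entire matrix functions csr(M) := Σ_{k≥0} (−1)ᵏ Mᵏ/(2k)! and ssr(M) := Σ_{k≥0} (−1)ᵏ Mᵏ/(2k+1)! for p × p real matrices M (the analytic continuations of cos(√z) and sin(√z)/√z), and define γ : ℝ → ℝ^{n×p} by γ(t) := Y · csr(t² ηᵀη) + t · η · ssr(t² ηᵀη). Then γ is twice differentiable, γ(0) = Y, γ′(0) = η, and for every t ∈ ℝ: γ(t)ᵀ γ(t) = I_p (γ stays on the Stiefel manifold), γ(t)ᵀ γ′(t) = 0 (the velocity is horizontal for the quotient to the Grassmann manifold), and γ″(t) + γ(t) · ( γ′(t)ᵀ γ′(t) ) = 0 (γ satisfies the horizontal geodesic equation). -/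
open Matrix

attribute [local instance] Matrix.normedAddCommGroup Matrix.normedSpace

/-- The entire function `csr(M) = Σ_k (−1)ᵏ Mᵏ/(2k)!`, the analytic continuation of
`cos (√z)` to matrix arguments. -/
noncomputable def csr {p : ℕ} (M : Matrix (Fin p) (Fin p) ℝ) : Matrix (Fin p) (Fin p) ℝ :=
  ∑' k : ℕ, ((-1 : ℝ) ^ k / (Nat.factorial (2 * k) : ℝ)) • M ^ k

/-- The entire function `ssr(M) = Σ_k (−1)ᵏ Mᵏ/(2k+1)!`, the analytic continuation of
`sin (√z)/√z` to matrix arguments. -/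
noncomputable def ssr {p : ℕ} (M : Matrix (Fin p) (Fin p) ℝ) : Matrix (Fin p) (Fin p) ℝ :=
  ∑' k : ℕ, ((-1 : ℝ) ^ k / (Nat.factorial (2 * k + 1) : ℝ)) • M ^ k

namespace Stmt13Aux


/-- The entrywise topology on matrices, written through the entrywise sup norm. -/
@[reducible] noncomputable def matTop {a b : ℕ} : TopologicalSpace (Matrix (Fin a) (Fin b) ℝ) :=
  (Matrix.normedAddCommGroup).toPseudoMetricSpace.toUniformSpace.toTopologicalSpace

section
attribute [local instance] matTop

/-- Matrix multiplication as a continuous bilinear map. -/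
noncomputable def mulCLM (n m q : ℕ) :
    Matrix (Fin n) (Fin m) ℝ →L[ℝ] Matrix (Fin m) (Fin q) ℝ →L[ℝ] Matrix (Fin n) (Fin q) ℝ :=
  LinearMap.toContinuousLinearMap <|
    (LinearMap.toContinuousLinearMap.toLinearMap).comp <|
      LinearMap.mk₂ ℝ (· * ·) (fun a b c => Matrix.add_mul a b c) (fun a b c => Matrix.smul_mul a b c) (fun a b c => Matrix.mul_add a b c) (fun c a b => Matrix.mul_smul a c b)

@[simp] lemma mulCLM_apply {n m q : ℕ} (A : Matrix (Fin n) (Fin m) ℝ)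
    (B : Matrix (Fin m) (Fin q) ℝ) : mulCLM n m q A B = A * B := by
  simp [mulCLM]

end

lemma HasDerivAt.matmul {n m q : ℕ} {f : ℝ → Matrix (Fin n) (Fin m) ℝ}
    {g : ℝ → Matrix (Fin m) (Fin q) ℝ} {f' g'} {t : ℝ}
    (hf : HasDerivAt f f' t) (hg : HasDerivAt g g' t) :
    HasDerivAt (fun t => f t * g t) (f' * g t + f t * g') t := by
  have h1 : HasDerivAt (fun t => mulCLM n m q (f t)) (mulCLM n m q f') t := by
    exact ((mulCLM n m q).hasFDerivAt).comp_hasDerivAt t hf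
  have h2 := h1.clm_apply hg
  simp only [mulCLM_apply] at h2
  exact h2

variable {p : ℕ}

lemma norm_mul_le' (A B : Matrix (Fin p) (Fin p) ℝ) : ‖A * B‖ ≤ p * ‖A‖ * ‖B‖ := by
  rw [Matrix.norm_le_iff (by positivity)]
  intro i j
  rw [Matrix.mul_apply]
  calc ‖∑ l, A i l * B l j‖ ≤ ∑ l, ‖A i l * B l j‖ := norm_sum_le _ _
    _ ≤ ∑ _l : Fin p, ‖A‖ * ‖B‖ := by
        refine Finset.sum_le_sum fun l _ => ?_
        rw [norm_mul]
        exact mul_le_mul (A.norm_entry_le_entrywise_sup_norm)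
          (B.norm_entry_le_entrywise_sup_norm) (norm_nonneg _) (norm_nonneg _)
    _ = p * ‖A‖ * ‖B‖ := by simp [Finset.sum_const, mul_assoc]

lemma norm_pow_le' (A : Matrix (Fin p) (Fin p) ℝ) (k : ℕ) :
    ‖A ^ k‖ ≤ (1 + p * ‖A‖) ^ k := by
  induction k with
  | zero =>
      simp only [pow_zero]
      rw [Matrix.norm_le_iff zero_le_one]
      intro i j
      rw [Matrix.one_apply]
      split <;> simp
  | succ k ih =>
      rw [pow_succ]
      calc ‖A ^ k * A‖ ≤ p * ‖A ^ k‖ * ‖A‖ := norm_mul_le' _ _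
        _ ≤ (1 + p * ‖A‖) ^ k * (1 + p * ‖A‖) := by
            have h1 : (0:ℝ) ≤ ‖A‖ := norm_nonneg _
            have h2 : (0:ℝ) ≤ ‖A ^ k‖ := norm_nonneg _
            have h3 : (0:ℝ) ≤ (1 + p * ‖A‖) ^ k := by positivity
            have h4 : (0:ℝ) ≤ (p:ℝ) := by positivity
            nlinarith [mul_le_mul_of_nonneg_left ih (mul_nonneg h4 h1)]
        _ = (1 + p * ‖A‖) ^ (k + 1) := (pow_succ _ _).symm

lemma summable_coef (A : Matrix (Fin p) (Fin p) ℝ) (coef : ℕ → ℝ) (C : ℝ) (hC : 0 ≤ C)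
    (h : ∀ k, |coef k| ≤ C ^ k / (Nat.factorial k : ℝ)) :
    Summable (fun k => coef k • A ^ k) := by
  refine Summable.of_norm_bounded
    (g := fun k => (C * (1 + p * ‖A‖)) ^ k / (Nat.factorial k : ℝ)) ?_ ?_
  · exact Real.summable_pow_div_factorial _
  · intro k
    rw [norm_smul]
    calc ‖coef k‖ * ‖A ^ k‖ ≤ (C ^ k / (Nat.factorial k : ℝ)) * (1 + p * ‖A‖) ^ k := by
          refine mul_le_mul (by simpa [Real.norm_eq_abs] using h k) (norm_pow_le' A k)
            (norm_nonneg _) (by positivity)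
      _ = (C * (1 + p * ‖A‖)) ^ k / (Nat.factorial k : ℝ) := by
          rw [mul_pow]; ring

end Stmt13Aux

namespace Stmt13Aux

variable {p : ℕ}

abbrev Mat (p : ℕ) := Matrix (Fin p) (Fin p) ℝ

/-- `cc N t = Σ (-1)^k t^{2k}/(2k)! • N^k` -/
noncomputable def cc (N : Mat p) (t : ℝ) : Mat p :=
  ∑' k : ℕ, ((-1 : ℝ) ^ k / (Nat.factorial (2 * k) : ℝ) * t ^ (2 * k)) • N ^ k

/-- `ss N t = Σ (-1)^k t^{2k+1}/(2k+1)! • N^k` -/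
noncomputable def ss (N : Mat p) (t : ℝ) : Mat p :=
  ∑' k : ℕ, ((-1 : ℝ) ^ k / (Nat.factorial (2 * k + 1) : ℝ) * t ^ (2 * k + 1)) • N ^ k

lemma summable_coef' (A : Mat p) (coef : ℕ → ℝ) (C D : ℝ) (hC : 0 ≤ C) (hD : 0 ≤ D)
    (h : ∀ k, |coef k| ≤ D * C ^ k / (Nat.factorial k : ℝ)) :
    Summable (fun k => coef k • A ^ k) := by
  refine Summable.of_norm_bounded
    (g := fun k => D * ((C * (1 + p * ‖A‖)) ^ k / (Nat.factorial k : ℝ))) ?_ ?_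
  · exact (Real.summable_pow_div_factorial _).mul_left D
  · intro k
    rw [norm_smul]
    calc ‖coef k‖ * ‖A ^ k‖ ≤ (D * C ^ k / (Nat.factorial k : ℝ)) * (1 + p * ‖A‖) ^ k := by
          refine mul_le_mul (by simpa [Real.norm_eq_abs] using h k) (norm_pow_le' A k)
            (norm_nonneg _) (by positivity)
      _ = D * ((C * (1 + p * ‖A‖)) ^ k / (Nat.factorial k : ℝ)) := by
          rw [mul_pow]; ring

lemma kfac_le_2kfac (k : ℕ) : ((Nat.factorial k : ℝ)) ≤ (Nat.factorial (2 * k) : ℝ) := by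
  exact_mod_cast Nat.factorial_le (by omega)

lemma kfac_le_2k1fac (k : ℕ) : ((Nat.factorial k : ℝ)) ≤ (Nat.factorial (2 * k + 1) : ℝ) := by
  exact_mod_cast Nat.factorial_le (by omega)

lemma abs_coef_cc (t : ℝ) (k : ℕ) :
    |(-1 : ℝ) ^ k / (Nat.factorial (2 * k) : ℝ) * t ^ (2 * k)|
      ≤ 1 * ((1 + |t|) ^ 2) ^ k / (Nat.factorial k : ℝ) := by
  have h1 : |(-1 : ℝ) ^ k / (Nat.factorial (2 * k) : ℝ) * t ^ (2 * k)|
      = |t| ^ (2 * k) / (Nat.factorial (2 * k) : ℝ) := by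
    rw [abs_mul, abs_div, abs_pow, abs_pow, abs_neg, abs_one, one_pow, one_div,
      abs_of_nonneg (by positivity : (0:ℝ) ≤ (Nat.factorial (2 * k) : ℝ))]
    ring
  rw [h1, one_mul]
  refine div_le_div₀ (by positivity) ?_ (by positivity) (kfac_le_2kfac k)
  calc |t| ^ (2 * k) = (|t| ^ 2) ^ k := by rw [← pow_mul, mul_comm]
    _ ≤ ((1 + |t|) ^ 2) ^ k := by
        refine pow_le_pow_left₀ (by positivity) ?_ k
        nlinarith [abs_nonneg t]

lemma abs_coef_ss (t : ℝ) (k : ℕ) :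
    |(-1 : ℝ) ^ k / (Nat.factorial (2 * k + 1) : ℝ) * t ^ (2 * k + 1)|
      ≤ (1 + |t|) * ((1 + |t|) ^ 2) ^ k / (Nat.factorial k : ℝ) := by
  have h1 : |(-1 : ℝ) ^ k / (Nat.factorial (2 * k + 1) : ℝ) * t ^ (2 * k + 1)|
      = |t| ^ (2 * k + 1) / (Nat.factorial (2 * k + 1) : ℝ) := by
    rw [abs_mul, abs_div, abs_pow, abs_pow, abs_neg, abs_one, one_pow, one_div,
      abs_of_nonneg (by positivity : (0:ℝ) ≤ (Nat.factorial (2 * k + 1) : ℝ))]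
    ring
  rw [h1]
  refine div_le_div₀ (by positivity) ?_ (by positivity) (kfac_le_2k1fac k)
  calc |t| ^ (2 * k + 1) ≤ (1 + |t|) ^ (2 * k + 1) := by
        refine pow_le_pow_left₀ (abs_nonneg t) ?_ _
        nlinarith [abs_nonneg t]
    _ = (1 + |t|) * ((1 + |t|) ^ 2) ^ k := by rw [← pow_mul, mul_comm 2 k]; ring

lemma summable_cc (N : Mat p) (t : ℝ) :
    Summable (fun k : ℕ =>
      ((-1 : ℝ) ^ k / (Nat.factorial (2 * k) : ℝ) * t ^ (2 * k)) • N ^ k) :=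
  summable_coef' N _ ((1 + |t|) ^ 2) 1 (by positivity) (by norm_num)
    (fun k => abs_coef_cc t k)

lemma summable_ss (N : Mat p) (t : ℝ) :
    Summable (fun k : ℕ =>
      ((-1 : ℝ) ^ k / (Nat.factorial (2 * k + 1) : ℝ) * t ^ (2 * k + 1)) • N ^ k) :=
  summable_coef' N _ ((1 + |t|) ^ 2) (1 + |t|) (by positivity) (by positivity)
    (fun k => abs_coef_ss t k)

end Stmt13Aux

namespace Stmt13Aux

variable {p : ℕ}

lemma mul_tsum (A : Mat p) (g : ℕ → Mat p) (hg : Summable g) :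
    A * (∑' k, g k) = ∑' k, A * g k := by
  have := (mulCLM p p p A).map_tsum hg
  simp only [mulCLM_apply] at this
  exact this

lemma tsum_mul (A : Mat p) (g : ℕ → Mat p) (hg : Summable g) :
    (∑' k, g k) * A = ∑' k, g k * A := by
  have := ((mulCLM p p p).flip A).map_tsum hg
  simp only [ContinuousLinearMap.flip_apply, mulCLM_apply] at this
  exact this

/-- transpose as a continuous linear map -/
noncomputable def transposeCLM (p : ℕ) : Mat p →L[ℝ] Mat p :=
  LinearMap.toContinuousLinearMap
    { toFun := fun M => Mᵀ
      map_add' := fun a b => Matrix.transpose_add a b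
      map_smul' := fun c a => Matrix.transpose_smul c a }

@[simp] lemma transposeCLM_apply (A : Mat p) : transposeCLM p A = Aᵀ := by
  simp [transposeCLM]

lemma tsum_transpose (g : ℕ → Mat p) (hg : Summable g) :
    (∑' k, g k)ᵀ = ∑' k, (g k)ᵀ := by
  have := (transposeCLM p).map_tsum hg
  simpa using this

lemma cc_zero (N : Mat p) : cc N 0 = 1 := by
  rw [cc, tsum_eq_single 0]
  · norm_num
  · intro k hk
    rw [zero_pow (by omega), mul_zero, zero_smul]

lemma ss_zero (N : Mat p) : ss N 0 = 0 := by
  rw [ss]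
  have : ∀ k : ℕ, ((-1 : ℝ) ^ k / (Nat.factorial (2 * k + 1) : ℝ) * (0:ℝ) ^ (2 * k + 1)) • N ^ k
      = 0 := by
    intro k
    rw [zero_pow (by omega), mul_zero, zero_smul]
  simp only [this, tsum_zero]

lemma cc_comm (N A : Mat p) (h : A * N = N * A) (t : ℝ) : A * cc N t = cc N t * A := by
  rw [cc, mul_tsum A _ (summable_cc N t), tsum_mul A _ (summable_cc N t)]
  refine tsum_congr fun k => ?_
  rw [Matrix.mul_smul, Matrix.smul_mul, ((Commute.pow_right h k) : _)]

lemma ss_comm (N A : Mat p) (h : A * N = N * A) (t : ℝ) : A * ss N t = ss N t * A := by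
  rw [ss, mul_tsum A _ (summable_ss N t), tsum_mul A _ (summable_ss N t)]
  refine tsum_congr fun k => ?_
  rw [Matrix.mul_smul, Matrix.smul_mul, ((Commute.pow_right h k) : _)]

lemma cc_transpose (N : Mat p) (t : ℝ) : (cc N t)ᵀ = cc Nᵀ t := by
  rw [cc, cc, tsum_transpose _ (summable_cc N t)]
  refine tsum_congr fun k => ?_
  rw [Matrix.transpose_smul, Matrix.transpose_pow]

lemma ss_transpose (N : Mat p) (t : ℝ) : (ss N t)ᵀ = ss Nᵀ t := by
  rw [ss, ss, tsum_transpose _ (summable_ss N t)]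
  refine tsum_congr fun k => ?_
  rw [Matrix.transpose_smul, Matrix.transpose_pow]

end Stmt13Aux

namespace Stmt13Aux

variable {p : ℕ}

lemma hasDerivAt_tsum_ball {f f' : ℕ → ℝ → Mat p} {u : ℕ → ℝ} {R t : ℝ}
    (hu : Summable u) (hf : ∀ k x, HasDerivAt (f k) (f' k x) x)
    (hf' : ∀ k x, x ∈ Metric.ball (0:ℝ) R → ‖f' k x‖ ≤ u k)
    (hsum : ∀ x, Summable (fun k => f k x)) (ht : t ∈ Metric.ball (0:ℝ) R) :
    HasDerivAt (fun x => ∑' k, f k x) (∑' k, f' k t) t := by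
  refine hasDerivAt_of_tendstoUniformlyOn (f := fun (s : Finset ℕ) x => ∑ k ∈ s, f k x)
    (f' := fun (s : Finset ℕ) x => ∑ k ∈ s, f' k x) Metric.isOpen_ball
    (tendstoUniformlyOn_tsum hu hf') ?_ ?_ ht
  · exact Filter.Eventually.of_forall (fun s x _ => HasDerivAt.fun_sum (fun k _ => hf k x))
  · exact fun x _ => (hsum x).hasSum

lemma two_mul_le_four_pow (k : ℕ) : 2 * k ≤ 4 ^ k := by
  induction k with
  | zero => norm_num
  | succ k ih =>
      have h1 : 1 ≤ 4 ^ k := Nat.one_le_pow k 4 (by norm_num)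
      have : 4 ^ (k + 1) = 4 * 4 ^ k := by ring
      omega

lemma hasDerivAt_ss (N : Mat p) (t : ℝ) : HasDerivAt (ss N) (cc N t) t := by
  have key : HasDerivAt (fun x => ∑' k : ℕ,
      ((-1 : ℝ) ^ k / (Nat.factorial (2 * k + 1) : ℝ) * x ^ (2 * k + 1)) • N ^ k)
      (∑' k : ℕ, ((-1 : ℝ) ^ k / (Nat.factorial (2 * k + 1) : ℝ)
        * ((2 * k + 1 : ℕ) * t ^ (2 * k + 1 - 1))) • N ^ k) t := by
    refine hasDerivAt_tsum_ball
      (f' := fun k x => ((-1 : ℝ) ^ k / (Nat.factorial (2 * k + 1) : ℝ)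
        * ((2 * k + 1 : ℕ) * x ^ (2 * k + 1 - 1))) • N ^ k)
      (R := |t| + 1)
      (u := fun k => (((|t| + 1) ^ 2 * (1 + p * ‖N‖)) ^ k / (Nat.factorial k : ℝ)))
      (Real.summable_pow_div_factorial _) ?_ ?_ (fun x => summable_ss N x) ?_
    · intro k x
      exact ((hasDerivAt_pow (2 * k + 1) x).const_mul
        ((-1 : ℝ) ^ k / (Nat.factorial (2 * k + 1) : ℝ))).smul_const (N ^ k)
    · intro k x hx
      rw [mem_ball_zero_iff, Real.norm_eq_abs] at hx
      rw [norm_smul]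
      have h1 : ‖(-1 : ℝ) ^ k / (Nat.factorial (2 * k + 1) : ℝ)
          * ((2 * k + 1 : ℕ) * x ^ (2 * k + 1 - 1))‖
          = (2 * k + 1 : ℝ) * |x| ^ (2 * k) / (Nat.factorial (2 * k + 1) : ℝ) := by
        rw [Real.norm_eq_abs, abs_mul, abs_div, abs_pow, abs_neg, abs_one, one_pow,
          abs_mul, abs_pow]
        simp only [Nat.add_sub_cancel]
        rw [abs_of_nonneg (by positivity : (0:ℝ) ≤ ((2 * k + 1 : ℕ) : ℝ)),
          abs_of_nonneg (by positivity : (0:ℝ) ≤ (Nat.factorial (2 * k + 1) : ℝ))]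
        push_cast; ring
      rw [h1]
      have hfac : ((2 * k + 1 : ℝ)) / (Nat.factorial (2 * k + 1) : ℝ)
          = 1 / (Nat.factorial (2 * k) : ℝ) := by
        rw [Nat.factorial_succ]
        have h0 : (Nat.factorial (2 * k) : ℝ) ≠ 0 := by positivity
        field_simp
        push_cast; ring
      have hx2 : |x| ^ (2 * k) ≤ ((|t| + 1) ^ 2) ^ k := by
        calc |x| ^ (2 * k) ≤ (|t| + 1) ^ (2 * k) :=
              pow_le_pow_left₀ (abs_nonneg x) (le_of_lt hx) _
          _ = ((|t| + 1) ^ 2) ^ k := by rw [← pow_mul]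
      calc (2 * k + 1 : ℝ) * |x| ^ (2 * k) / (Nat.factorial (2 * k + 1) : ℝ) * ‖N ^ k‖
          = ((2 * k + 1 : ℝ) / (Nat.factorial (2 * k + 1) : ℝ)) * (|x| ^ (2 * k) * ‖N ^ k‖) := by
            ring
        _ = (1 / (Nat.factorial (2 * k) : ℝ)) * (|x| ^ (2 * k) * ‖N ^ k‖) := by rw [hfac]
        _ ≤ (1 / (Nat.factorial k : ℝ)) * (((|t| + 1) ^ 2) ^ k * (1 + p * ‖N‖) ^ k) := by
            refine mul_le_mul ?_ ?_ (by positivity) (by positivity)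
            · exact one_div_le_one_div_of_le (by positivity) (kfac_le_2kfac k)
            · exact mul_le_mul hx2 (norm_pow_le' N k) (norm_nonneg _) (by positivity)
        _ = ((|t| + 1) ^ 2 * (1 + p * ‖N‖)) ^ k / (Nat.factorial k : ℝ) := by
            rw [mul_pow]; ring
    · rw [mem_ball_zero_iff, Real.norm_eq_abs]
      linarith [abs_nonneg t]
  have heq : (∑' k : ℕ, ((-1 : ℝ) ^ k / (Nat.factorial (2 * k + 1) : ℝ)
      * ((2 * k + 1 : ℕ) * t ^ (2 * k + 1 - 1))) • N ^ k) = cc N t := by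
    rw [cc]
    refine tsum_congr fun k => ?_
    congr 1
    simp only [Nat.add_sub_cancel]
    rw [Nat.factorial_succ]
    have h0 : (Nat.factorial (2 * k) : ℝ) ≠ 0 := by positivity
    push_cast
    field_simp
  rw [heq] at key
  exact key

end Stmt13Aux

namespace Stmt13Aux

variable {p : ℕ}

lemma hasDerivAt_cc (N : Mat p) (t : ℝ) : HasDerivAt (cc N) (-(N * ss N t)) t := by
  set R : ℝ := |t| + 1 with hR
  have hR1 : (1:ℝ) ≤ R := by rw [hR]; linarith [abs_nonneg t]
  have key : HasDerivAt (fun x => ∑' k : ℕ,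
      ((-1 : ℝ) ^ k / (Nat.factorial (2 * k) : ℝ) * x ^ (2 * k)) • N ^ k)
      (∑' k : ℕ, ((-1 : ℝ) ^ k / (Nat.factorial (2 * k) : ℝ)
        * ((2 * k : ℕ) * t ^ (2 * k - 1))) • N ^ k) t := by
    refine hasDerivAt_tsum_ball
      (f' := fun k x => ((-1 : ℝ) ^ k / (Nat.factorial (2 * k) : ℝ)
        * ((2 * k : ℕ) * x ^ (2 * k - 1))) • N ^ k)
      (R := R)
      (u := fun k => ((4 * R ^ 2 * (1 + p * ‖N‖)) ^ k / (Nat.factorial k : ℝ)))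
      (Real.summable_pow_div_factorial _) ?_ ?_ (fun x => summable_cc N x) ?_
    · intro k x
      exact ((hasDerivAt_pow (2 * k) x).const_mul
        ((-1 : ℝ) ^ k / (Nat.factorial (2 * k) : ℝ))).smul_const (N ^ k)
    · intro k x hx
      rw [mem_ball_zero_iff, Real.norm_eq_abs] at hx
      rw [norm_smul]
      have h1 : ‖(-1 : ℝ) ^ k / (Nat.factorial (2 * k) : ℝ)
          * ((2 * k : ℕ) * x ^ (2 * k - 1))‖
          = (2 * k : ℝ) * |x| ^ (2 * k - 1) / (Nat.factorial (2 * k) : ℝ) := by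
        rw [Real.norm_eq_abs, abs_mul, abs_div, abs_pow, abs_neg, abs_one, one_pow,
          abs_mul, abs_pow]
        rw [abs_of_nonneg (by positivity : (0:ℝ) ≤ ((2 * k : ℕ) : ℝ)),
          abs_of_nonneg (by positivity : (0:ℝ) ≤ (Nat.factorial (2 * k) : ℝ))]
        push_cast; ring
      rw [h1]
      have hnum : (2 * k : ℝ) * |x| ^ (2 * k - 1) ≤ 4 ^ k * R ^ (2 * k) := by
        have h2 : (2 * k : ℝ) ≤ 4 ^ k := by exact_mod_cast two_mul_le_four_pow k
        have h3 : |x| ^ (2 * k - 1) ≤ R ^ (2 * k - 1) :=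
          pow_le_pow_left₀ (abs_nonneg x) (le_of_lt hx) _
        have h4 : R ^ (2 * k - 1) ≤ R ^ (2 * k) :=
          pow_le_pow_right₀ hR1 (Nat.sub_le _ _)
        have h5 : (0:ℝ) ≤ |x| ^ (2 * k - 1) := by positivity
        nlinarith
      calc (2 * k : ℝ) * |x| ^ (2 * k - 1) / (Nat.factorial (2 * k) : ℝ) * ‖N ^ k‖
          ≤ (4 ^ k * R ^ (2 * k)) / (Nat.factorial k : ℝ) * (1 + p * ‖N‖) ^ k := by
            refine mul_le_mul ?_ (norm_pow_le' N k) (norm_nonneg _) (by positivity)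
            exact div_le_div₀ (by positivity) hnum (by positivity) (kfac_le_2kfac k)
        _ = (4 * R ^ 2 * (1 + p * ‖N‖)) ^ k / (Nat.factorial k : ℝ) := by
            rw [mul_pow, mul_pow, ← pow_mul]
            ring
    · rw [mem_ball_zero_iff, Real.norm_eq_abs, hR]
      linarith
  have hsummable : Summable (fun k : ℕ => ((-1 : ℝ) ^ k / (Nat.factorial (2 * k) : ℝ)
      * ((2 * k : ℕ) * t ^ (2 * k - 1))) • N ^ k) := by
    refine summable_coef' N _ (4 * R ^ 2) 1 (by positivity) zero_le_one fun k => ?_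
    have h1 : |(-1 : ℝ) ^ k / (Nat.factorial (2 * k) : ℝ) * ((2 * k : ℕ) * t ^ (2 * k - 1))|
        = (2 * k : ℝ) * |t| ^ (2 * k - 1) / (Nat.factorial (2 * k) : ℝ) := by
      rw [abs_mul, abs_div, abs_pow, abs_neg, abs_one, one_pow, abs_mul, abs_pow]
      rw [abs_of_nonneg (by positivity : (0:ℝ) ≤ ((2 * k : ℕ) : ℝ)),
        abs_of_nonneg (by positivity : (0:ℝ) ≤ (Nat.factorial (2 * k) : ℝ))]
      push_cast; ring
    rw [h1, one_mul]
    have hnum : (2 * k : ℝ) * |t| ^ (2 * k - 1) ≤ (4 * R ^ 2) ^ k := by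
      have h2 : (2 * k : ℝ) ≤ 4 ^ k := by exact_mod_cast two_mul_le_four_pow k
      have h3 : |t| ^ (2 * k - 1) ≤ R ^ (2 * k - 1) :=
        pow_le_pow_left₀ (abs_nonneg t) (by rw [hR]; linarith) _
      have h4 : R ^ (2 * k - 1) ≤ R ^ (2 * k) :=
        pow_le_pow_right₀ hR1 (Nat.sub_le _ _)
      have h5 : (0:ℝ) ≤ |t| ^ (2 * k - 1) := by positivity
      have h6 : (4 * R ^ 2) ^ k = 4 ^ k * R ^ (2 * k) := by
        rw [mul_pow, ← pow_mul]
      nlinarith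
    exact div_le_div₀ (by positivity) hnum (by positivity) (kfac_le_2kfac k)
  have heq : (∑' k : ℕ, ((-1 : ℝ) ^ k / (Nat.factorial (2 * k) : ℝ)
      * ((2 * k : ℕ) * t ^ (2 * k - 1))) • N ^ k) = -(N * ss N t) := by
    rw [ss, mul_tsum N _ (summable_ss N t), ← tsum_neg]
    rw [Summable.tsum_eq_zero_add hsummable]
    have h0 : ((-1 : ℝ) ^ 0 / (Nat.factorial (2 * 0) : ℝ)
        * ((2 * 0 : ℕ) * t ^ (2 * 0 - 1))) • N ^ 0 = 0 := by
      norm_num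
    rw [h0, zero_add]
    refine tsum_congr fun k => ?_
    have hpow : N * (((-1 : ℝ) ^ k / (Nat.factorial (2 * k + 1) : ℝ) * t ^ (2 * k + 1)) • N ^ k)
        = ((-1 : ℝ) ^ k / (Nat.factorial (2 * k + 1) : ℝ) * t ^ (2 * k + 1)) • N ^ (k + 1) := by
      rw [Matrix.mul_smul, ← pow_succ']
    rw [hpow, ← neg_smul]
    congr 1
    · have he1 : 2 * (k + 1) = 2 * k + 1 + 1 := by ring
      rw [he1, Nat.factorial_succ]
      simp only [Nat.add_sub_cancel]
      have h0 : (Nat.factorial (2 * k + 1) : ℝ) ≠ 0 := by positivity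
      push_cast
      field_simp
      ring
  rw [heq] at key
  exact key

end Stmt13Aux

namespace Stmt13Aux

variable {p : ℕ}

lemma pyth (N : Mat p) (t : ℝ) :
    cc N t * cc N t + N * (ss N t * ss N t) = 1 := by
  have hF : ∀ s : ℝ, HasDerivAt (fun x => cc N x * cc N x + N * (ss N x * ss N x)) 0 s := by
    intro s
    have hc := hasDerivAt_cc N s
    have hs := hasDerivAt_ss N s
    have h := (HasDerivAt.matmul hc hc).add
      (HasDerivAt.matmul (hasDerivAt_const s N) (HasDerivAt.matmul hs hs))
    refine h.congr_deriv ?_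
    have hNc : N * cc N s = cc N s * N := cc_comm N N rfl s
    have e1 : cc N s * (N * ss N s) = N * (cc N s * ss N s) := by
      rw [← mul_assoc, ← hNc, mul_assoc]
    have e2 : N * ss N s * cc N s = N * (ss N s * cc N s) := mul_assoc _ _ _
    simp only [Matrix.zero_mul, zero_add, Matrix.neg_mul, Matrix.mul_neg, Matrix.mul_add]
    rw [e1, e2]
    abel
  have hconst := is_const_of_deriv_eq_zero
    (fun x => (hF x).differentiableAt) (fun x => (hF x).deriv) t 0
  simpa [cc_zero, ss_zero] using hconst

lemma summable_cc' (N : Mat p) (t : ℝ) :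
    Summable (fun k : ℕ =>
      ((-1 : ℝ) ^ k / (Nat.factorial (2 * k + 1) : ℝ) * t ^ (2 * k)) • N ^ k) := by
  refine summable_coef' N _ ((1 + |t|) ^ 2) 1 (by positivity) zero_le_one fun k => ?_
  have h1 : |(-1 : ℝ) ^ k / (Nat.factorial (2 * k + 1) : ℝ) * t ^ (2 * k)|
      = |t| ^ (2 * k) / (Nat.factorial (2 * k + 1) : ℝ) := by
    rw [abs_mul, abs_div, abs_pow, abs_pow, abs_neg, abs_one, one_pow, one_div,
      abs_of_nonneg (by positivity : (0:ℝ) ≤ (Nat.factorial (2 * k + 1) : ℝ))]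
    ring
  rw [h1, one_mul]
  refine div_le_div₀ (by positivity) ?_ (by positivity) (kfac_le_2k1fac k)
  calc |t| ^ (2 * k) = (|t| ^ 2) ^ k := by rw [← pow_mul, mul_comm]
    _ ≤ ((1 + |t|) ^ 2) ^ k := by
        refine pow_le_pow_left₀ (by positivity) ?_ k
        nlinarith [abs_nonneg t]

lemma csr_eq (N : Mat p) (t : ℝ) : csr (t ^ 2 • N) = cc N t := by
  rw [csr, cc]
  refine tsum_congr fun k => ?_
  rw [smul_pow, smul_smul]
  congr 1
  rw [← pow_mul]

lemma ssr_eq (N : Mat p) (t : ℝ) : t • ssr (t ^ 2 • N) = ss N t := by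
  have h1 : ssr (t ^ 2 • N) = ∑' k : ℕ,
      ((-1 : ℝ) ^ k / (Nat.factorial (2 * k + 1) : ℝ) * t ^ (2 * k)) • N ^ k := by
    rw [ssr]
    refine tsum_congr fun k => ?_
    rw [smul_pow, smul_smul]
    congr 1
    rw [← pow_mul]
  rw [h1, ← Summable.tsum_const_smul t (summable_cc' N t), ss]
  refine tsum_congr fun k => ?_
  rw [smul_smul]
  congr 1
  ring

end Stmt13Aux

open Stmt13Aux in
theorem stmt13
    (n p : ℕ) (hp : 0 < p) (hpn : p < n)
    (Y η : Matrix (Fin n) (Fin p) ℝ)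
    (hY : Yᵀ * Y = 1) (hη : Yᵀ * η = 0)
    (γ : ℝ → Matrix (Fin n) (Fin p) ℝ)
    (hγ : ∀ t : ℝ, γ t = Y * csr (t ^ 2 • (ηᵀ * η)) + t • (η * ssr (t ^ 2 • (ηᵀ * η)))) :
    ∃ γ' γ'' : ℝ → Matrix (Fin n) (Fin p) ℝ,
      (∀ t : ℝ, HasDerivAt γ (γ' t) t) ∧
      (∀ t : ℝ, HasDerivAt γ' (γ'' t) t) ∧
      γ 0 = Y ∧ γ' 0 = η ∧
      ∀ t : ℝ,
        (γ t)ᵀ * γ t = 1 ∧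
        (γ t)ᵀ * γ' t = 0 ∧
        γ'' t + γ t * ((γ' t)ᵀ * γ' t) = 0 := by
  set N : Mat p := ηᵀ * η with hN
  have hNT : Nᵀ = N := by rw [hN, Matrix.transpose_mul, Matrix.transpose_transpose]
  have hccT : ∀ t, (cc N t)ᵀ = cc N t := fun t => by rw [cc_transpose, hNT]
  have hssT : ∀ t, (ss N t)ᵀ = ss N t := fun t => by rw [ss_transpose, hNT]
  have hNc : ∀ t, N * cc N t = cc N t * N := fun t => cc_comm N N rfl t
  have hNs : ∀ t, N * ss N t = ss N t * N := fun t => ss_comm N N rfl t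
  have hcs : ∀ t, cc N t * ss N t = ss N t * cc N t :=
    fun t => ss_comm N (cc N t) (hNc t).symm t
  have hγ2 : γ = fun t => Y * cc N t + η * ss N t := by
    funext t
    rw [hγ t, csr_eq N t, ← Matrix.mul_smul, ssr_eq N t]
  have hY' : ∀ X : Mat p, Yᵀ * (Y * X) = X := fun X => by
    rw [← Matrix.mul_assoc, hY, Matrix.one_mul]
  have hYη : ∀ X : Mat p, Yᵀ * (η * X) = 0 := fun X => by
    rw [← Matrix.mul_assoc, hη, Matrix.zero_mul]
  have hηY0 : ηᵀ * Y = 0 := by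
    have := congrArg Matrix.transpose hη
    simpa using this
  have hηY : ∀ X : Mat p, ηᵀ * (Y * X) = 0 := fun X => by
    rw [← Matrix.mul_assoc, hηY0, Matrix.zero_mul]
  have hηη : ∀ X : Mat p, ηᵀ * (η * X) = N * X := fun X => by
    rw [← Matrix.mul_assoc, ← hN]
  refine ⟨fun t => η * cc N t - Y * (N * ss N t),
          fun t => -(Y * (N * cc N t)) - η * (N * ss N t), ?_, ?_, ?_, ?_, ?_⟩
  · -- first derivative
    intro t
    rw [hγ2]
    have h := (HasDerivAt.matmul (hasDerivAt_const t Y) (hasDerivAt_cc N t)).add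
      (HasDerivAt.matmul (hasDerivAt_const t η) (hasDerivAt_ss N t))
    refine h.congr_deriv ?_
    simp only [Matrix.zero_mul, zero_add, Matrix.mul_neg]
    abel
  · -- second derivative
    intro t
    have h := (HasDerivAt.matmul (hasDerivAt_const t η) (hasDerivAt_cc N t)).sub
      (HasDerivAt.matmul (hasDerivAt_const t Y)
        (HasDerivAt.matmul (hasDerivAt_const t N) (hasDerivAt_ss N t)))
    refine h.congr_deriv ?_
    simp only [Matrix.zero_mul, zero_add, Matrix.mul_neg]
    abel
  · rw [hγ2]
    simp [cc_zero, ss_zero]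
  · show η * cc N 0 - Y * (N * ss N 0) = η
    rw [cc_zero, ss_zero, Matrix.mul_one, Matrix.mul_zero, Matrix.mul_zero, sub_zero]
  · intro t
    rw [hγ2]
    set c := cc N t with hc
    set s := ss N t with hs
    have hTγ : (Y * c + η * s)ᵀ = c * Yᵀ + s * ηᵀ := by
      rw [Matrix.transpose_add, Matrix.transpose_mul, Matrix.transpose_mul, hccT, hssT]
    have hTγ' : (η * c - Y * (N * s))ᵀ = c * ηᵀ - s * N * Yᵀ := by
      rw [Matrix.transpose_sub, Matrix.transpose_mul, Matrix.transpose_mul,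
        Matrix.transpose_mul, hccT, hssT, hNT, Matrix.mul_assoc]
    refine ⟨?_, ?_, ?_⟩
    · -- isometry
      rw [hTγ]
      simp only [Matrix.add_mul, Matrix.mul_add, Matrix.mul_assoc, hY', hYη, hηY, hηη,
        Matrix.mul_zero, add_zero, zero_add]
      have e : s * (N * s) = N * (s * s) := by
        rw [← mul_assoc, ← hNs, mul_assoc]
      rw [e]
      exact pyth N t
    · -- horizontality
      rw [hTγ]
      simp only [Matrix.add_mul, Matrix.mul_sub, Matrix.mul_assoc, hY', hYη, hηY, hηη,
        Matrix.mul_zero, add_zero, zero_add, zero_sub, sub_zero]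
      have e : s * (N * c) = c * (N * s) := by
        calc s * (N * c) = s * N * c := (mul_assoc _ _ _).symm
          _ = N * s * c := by rw [← hNs]
          _ = N * (s * c) := mul_assoc _ _ _
          _ = N * (c * s) := by rw [← hcs]
          _ = N * c * s := (mul_assoc _ _ _).symm
          _ = c * N * s := by rw [hNc]
          _ = c * (N * s) := mul_assoc _ _ _
      rw [e]
      abel
    · -- geodesic equation
      rw [hTγ']
      have hvv : (c * ηᵀ - s * N * Yᵀ) * (η * c - Y * (N * s)) = N := by
        simp only [Matrix.sub_mul, Matrix.mul_sub, Matrix.mul_assoc, hY', hYη, hηY, hηη,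
          Matrix.mul_zero, sub_zero, zero_sub, sub_neg_eq_add, add_zero, zero_add]
        have t1 : c * (N * c) = N * (c * c) := by rw [← mul_assoc, ← hNc, mul_assoc]
        have t2 : s * (N * (N * s)) = N * (N * (s * s)) := by
          calc s * (N * (N * s)) = s * N * (N * s) := (mul_assoc _ _ _).symm
            _ = N * s * (N * s) := by rw [← hNs]
            _ = N * (s * (N * s)) := mul_assoc _ _ _
            _ = N * (s * N * s) := by rw [← mul_assoc s N s]
            _ = N * (N * s * s) := by rw [← hNs]
            _ = N * (N * (s * s)) := by rw [mul_assoc N s s]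
        rw [t1, t2, ← Matrix.mul_add, pyth N t, Matrix.mul_one]
      rw [hvv]
      have e1 : (Y * c + η * s) * N = Y * (N * c) + η * (N * s) := by
        rw [Matrix.add_mul, Matrix.mul_assoc, Matrix.mul_assoc, ← hNc, ← hNs]
      rw [e1]
      simp only [← hc, ← hs]
      abel
end

section
/- Let U be an n × n real matrix with UᵀU = U Uᵀ = I_n, and let K₀, …, K_q be n × n real matrices, each symmetric and idempotent (Kᵢᵀ = Kᵢ, Kᵢ² = Kᵢ), with Kᵢ Kⱼ = 0 for i ≠ j and Σᵢ Kᵢ = I_n. Define the linear map H on ℝ^{n×n} by H(ω) := (1/2) ( ω − U ωᵀ U − Σᵢ U Kᵢ (Uᵀ ω − ωᵀ U) Kᵢ ), and the subspace Hor := { η ∈ ℝ^{n×n} : Uᵀη + ηᵀU = 0 and Kᵢ (Uᵀη) Kᵢ = 0 for all i }. Then: H is idempotent; H(ω) ∈ Hor for every ω; H(η) = η for every η ∈ Hor (so the range of H is exactly Hor); and H is self-adjoint with respect to the trace inner product ⟨A, B⟩ = Tr(A Bᵀ) — hence H is the orthogonal projection of ℝ^{n×n} onto Hor. -/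
open Matrix

theorem stmt15
    (n q : ℕ) (U : Matrix (Fin n) (Fin n) ℝ)
    (hU1 : Uᵀ * U = 1) (hU2 : U * Uᵀ = 1)
    (K : Fin (q + 1) → Matrix (Fin n) (Fin n) ℝ)
    (hKsym : ∀ i, (K i)ᵀ = K i)
    (hKidem : ∀ i, K i * K i = K i)
    (hKorth : ∀ i j, i ≠ j → K i * K j = 0)
    (hKsum : ∑ i, K i = 1)
    (H : Matrix (Fin n) (Fin n) ℝ → Matrix (Fin n) (Fin n) ℝ)
    (hH : ∀ ω, H ω = (1 / 2 : ℝ) •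
      (ω - U * ωᵀ * U - ∑ i, U * K i * (Uᵀ * ω - ωᵀ * U) * K i)) :
    (∀ ω, H (H ω) = H ω) ∧
    (∀ ω, Uᵀ * H ω + (H ω)ᵀ * U = 0 ∧ ∀ i, K i * (Uᵀ * H ω) * K i = 0) ∧
    (∀ η, Uᵀ * η + ηᵀ * U = 0 → (∀ i, K i * (Uᵀ * η) * K i = 0) → H η = η) ∧
    (∀ A B : Matrix (Fin n) (Fin n) ℝ, (H A * Bᵀ).trace = (A * (H B)ᵀ).trace) := by
  -- Uᵀ * H ω in terms of the skew part C := Uᵀω - ωᵀU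
  have key : ∀ ω : Matrix (Fin n) (Fin n) ℝ, Uᵀ * H ω =
      (1 / 2 : ℝ) • ((Uᵀ * ω - ωᵀ * U) - ∑ i, K i * (Uᵀ * ω - ωᵀ * U) * K i) := by
    intro ω
    rw [hH, Matrix.mul_smul]
    congr 1
    rw [Matrix.mul_sub, Matrix.mul_sub, Finset.mul_sum]
    congr 1
    · congr 1
      rw [show U * ωᵀ * U = U * (ωᵀ * U) by rw [Matrix.mul_assoc],
        ← Matrix.mul_assoc, hU1, Matrix.one_mul]
    · refine Finset.sum_congr rfl fun i _ => ?_
      rw [show U * K i * (Uᵀ * ω - ωᵀ * U) * K i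
            = U * (K i * (Uᵀ * ω - ωᵀ * U) * K i) by
          simp only [Matrix.mul_assoc],
        ← Matrix.mul_assoc, hU1, Matrix.one_mul]
  -- transpose side
  have key2 : ∀ ω : Matrix (Fin n) (Fin n) ℝ, (H ω)ᵀ * U = -(Uᵀ * H ω) := by
    intro ω
    rw [key ω, hH ω, Matrix.transpose_smul, Matrix.smul_mul, ← smul_neg]
    congr 1
    simp only [Matrix.transpose_sub, Matrix.transpose_sum, Matrix.transpose_mul,
      Matrix.transpose_transpose, hKsym, Matrix.sub_mul, Finset.sum_mul,
      Matrix.mul_assoc, hU1, Matrix.mul_one, neg_sub, Finset.sum_sub_distrib,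
      Matrix.mul_sub, Finset.mul_sum, Matrix.sub_mul]
    abel
  -- membership of H ω in Hor
  have hor : ∀ ω : Matrix (Fin n) (Fin n) ℝ,
      Uᵀ * H ω + (H ω)ᵀ * U = 0 ∧ ∀ i, K i * (Uᵀ * H ω) * K i = 0 := by
    intro ω
    constructor
    · rw [key2 ω]; exact add_neg_cancel _
    · intro j
      rw [key ω]
      have hsum : K j * (∑ i, K i * (Uᵀ * ω - ωᵀ * U) * K i) * K j
          = K j * (Uᵀ * ω - ωᵀ * U) * K j := by
        rw [Finset.mul_sum, Finset.sum_mul]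
        rw [Finset.sum_eq_single j]
        · rw [show K j * (K j * (Uᵀ * ω - ωᵀ * U) * K j) * K j
              = (K j * K j) * (Uᵀ * ω - ωᵀ * U) * (K j * K j) by
            simp only [Matrix.mul_assoc], hKidem]
        · intro i _ hij
          rw [show K j * (K i * (Uᵀ * ω - ωᵀ * U) * K i) * K j
              = (K j * K i) * ((Uᵀ * ω - ωᵀ * U) * (K i * K j)) by
            simp only [Matrix.mul_assoc], hKorth j i (Ne.symm hij),
            Matrix.zero_mul]
        · intro h; exact absurd (Finset.mem_univ j) h
      rw [Matrix.mul_smul, Matrix.smul_mul, Matrix.mul_sub, Matrix.sub_mul, hsum]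
      simp
  -- fixed points on Hor
  have fix : ∀ η : Matrix (Fin n) (Fin n) ℝ, Uᵀ * η + ηᵀ * U = 0 →
      (∀ i, K i * (Uᵀ * η) * K i = 0) → H η = η := by
    intro η h1 h2
    have hskew : ηᵀ * U = -(Uᵀ * η) := by
      rw [eq_neg_iff_add_eq_zero, add_comm]; exact h1
    have hηT : ηᵀ = -(Uᵀ * η * Uᵀ) := by
      have := congrArg (· * Uᵀ) hskew
      simpa [Matrix.mul_assoc, hU2, Matrix.mul_one] using this
    have hsum0 : ∀ i, U * K i * (Uᵀ * η - ηᵀ * U) * K i = 0 := by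
      intro i
      rw [hskew, sub_neg_eq_add,
        show U * K i * (Uᵀ * η + Uᵀ * η) * K i
          = U * (K i * (Uᵀ * η) * K i) + U * (K i * (Uᵀ * η) * K i) by
          simp only [Matrix.mul_add, Matrix.add_mul, Matrix.mul_assoc], h2 i]
      simp
    rw [hH]
    simp only [hsum0, Finset.sum_const_zero, sub_zero]
    rw [show U * ηᵀ * U = -η by
      rw [hηT]
      simp only [Matrix.mul_neg, Matrix.neg_mul, neg_inj]
      rw [show U * (Uᵀ * η * Uᵀ) * U = (U * Uᵀ) * η * (Uᵀ * U) by
        simp only [Matrix.mul_assoc], hU1, hU2, Matrix.one_mul, Matrix.mul_one]]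
    rw [sub_neg_eq_add, ← two_smul ℝ η, smul_smul]
    norm_num
  refine ⟨fun ω => fix (H ω) (hor ω).1 (hor ω).2, hor, fix, ?_⟩
  -- self-adjointness
  intro A B
  rw [hH A, hH B]
  rw [Matrix.smul_mul, Matrix.transpose_smul, Matrix.mul_smul,
    Matrix.trace_smul, Matrix.trace_smul]
  congr 1
  rw [Matrix.sub_mul, Matrix.sub_mul, Matrix.trace_sub, Matrix.trace_sub,
    Matrix.transpose_sub, Matrix.transpose_sub, Matrix.mul_sub, Matrix.mul_sub,
    Matrix.trace_sub, Matrix.trace_sub]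
  congr 1
  · congr 1
    -- tr(U Aᵀ U Bᵀ) = tr(A (U Bᵀ U)ᵀ)
    rw [show (U * Bᵀ * U)ᵀ = Uᵀ * B * Uᵀ by
      simp [Matrix.transpose_mul, Matrix.mul_assoc]]
    rw [show U * Aᵀ * U * Bᵀ = (U * Aᵀ) * (U * Bᵀ) by simp [Matrix.mul_assoc],
      Matrix.trace_mul_comm, ← Matrix.trace_transpose]
    congr 1
    simp [Matrix.transpose_mul, Matrix.mul_assoc]
  · rw [Finset.sum_mul, Matrix.transpose_sum, Finset.mul_sum,
      Matrix.trace_sum, Matrix.trace_sum]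
    refine Finset.sum_congr rfl fun i _ => ?_
    rw [show (U * K i * (Uᵀ * B - Bᵀ * U) * K i)ᵀ
        = K i * (Bᵀ * U - Uᵀ * B) * K i * Uᵀ by
      simp [Matrix.transpose_mul, Matrix.transpose_sub, hKsym, Matrix.mul_assoc]]
    rw [show U * K i * (Uᵀ * A - Aᵀ * U) * K i * Bᵀ
        = (U * K i * Uᵀ) * (A * K i * Bᵀ) - U * K i * (Aᵀ * U) * (K i * Bᵀ) by
      simp only [Matrix.mul_sub, Matrix.sub_mul, Matrix.mul_assoc]]
    rw [show A * (K i * (Bᵀ * U - Uᵀ * B) * K i * Uᵀ)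
        = (A * K i * Bᵀ) * (U * K i * Uᵀ) - A * (K i * (Uᵀ * B) * (K i * Uᵀ)) by
      simp only [Matrix.mul_sub, Matrix.sub_mul, Matrix.mul_assoc]]
    rw [Matrix.trace_sub, Matrix.trace_sub]
    congr 1
    · exact Matrix.trace_mul_comm _ _
    · -- tr(U Kᵢ Aᵀ U Kᵢ Bᵀ) = tr(A Kᵢ Uᵀ B Kᵢ Uᵀ)
      rw [← Matrix.trace_transpose (U * K i * (Aᵀ * U) * (K i * Bᵀ))]
      rw [show (U * K i * (Aᵀ * U) * (K i * Bᵀ))ᵀ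
          = (B * K i * Uᵀ) * (A * K i * Uᵀ) by
        simp [Matrix.transpose_mul, hKsym, Matrix.mul_assoc],
        Matrix.trace_mul_comm]
      congr 1
      simp [Matrix.mul_assoc]
end
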